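/- arXiv:1208.2765 — 9 statements merged into one kernel-verified Lean document; each statement's English description precedes it below -/
import Mathlib

section
/- If a purely asynchronous cellular automaton C = (Z^d, N, Q, δ) with 0 ∈ N has a non-trivial local transition function, i.e. δ(ℓ) ≠ ℓ(0) for at least one local configuration ℓ ∈ Q^N, then there exist two distinct global configurations ĉ and č and two cells â, ǎ such that the single-cell updates coincide: Δ_{â}(ĉ) = Δ_{ǎ}(č). In particular, some global configuration has two different predecessors under single-cell asynchronous updating. -/
noncomputable section
open scoped Classical

/-- The set of cells of a `d`-dimensional cellular automaton: `ℤ^d`. -/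
abbrev Cell (d : ℕ) := Fin d → ℤ

/-- The global transition function `Δ_A` with active cell set `A`:
an active cell applies the local rule `δ` to the local configuration it
observes in its neighborhood `N`; a passive cell keeps its state. -/
def step {d : ℕ} {Q : Type*} (N : Finset (Cell d)) (δ : (↥N → Q) → Q)
    (A : Set (Cell d)) (c : Cell d → Q) : Cell d → Q :=
  fun i => if i ∈ A then δ (fun n => c (i + n.1)) else c i

/-- The difference set `D_{c,c'}` of two global configurations. -/
def diffSet {d : ℕ} {Q : Type*} (c c' : Cell d → Q) : Set (Cell d) :=
  {i | c i ≠ c' i}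

/-- Two purely asynchronous CAs are inverse to each other. -/
def PureInverse {d : ℕ} {Q : Type*} (N M : Finset (Cell d))
    (δ : (↥N → Q) → Q) (γ : (↥M → Q) → Q) : Prop :=
  ∀ c c' : Cell d → Q,
    (∃ A : Set (Cell d), c' = step N δ A c) ↔ (∃ A : Set (Cell d), c = step M γ A c')

/-- Two fully asynchronous CAs are inverse to each other. -/
def FullInverse {d : ℕ} {Q : Type*} (N M : Finset (Cell d))
    (δ : (↥N → Q) → Q) (γ : (↥M → Q) → Q) : Prop :=
  ∀ c c' : Cell d → Q,
    (∃ a : Cell d, c' = step N δ {a} c) ↔ (∃ a : Cell d, c = step M γ {a} c')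

open scoped Pointwise

/-- Lemma 1: a purely or fully asynchronous CA with `0 ∈ N` and a non-trivial
local transition function has two distinct global configurations whose
single-active-cell updates coincide; in particular, some configuration has
two different predecessors. -/
theorem two_predecessors {d : ℕ} {Q : Type*} (hd : 0 < d)
    (N : Finset (Cell d)) (h0 : (0 : Cell d) ∈ N) (δ : (↥N → Q) → Q)
    (hnt : ∃ ℓ : ↥N → Q, δ ℓ ≠ ℓ ⟨0, h0⟩) :
    ∃ (chat ccheck : Cell d → Q) (ahat acheck : Cell d),
      chat ≠ ccheck ∧ step N δ {ahat} chat = step N δ {acheck} ccheck := by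
  obtain ⟨ℓ, hℓ⟩ := hnt
  haveI : Nonempty (Fin d) := ⟨⟨0, hd⟩⟩
  obtain ⟨k, hk⟩ := (N - N).exists_notMem
  have hkN : ∀ a b : Cell d, a ∈ N → b ∈ N → k ≠ a - b := by
    intro a b ha hb h
    exact hk (h ▸ Finset.sub_mem_sub ha hb)
  have hk0 : k ≠ 0 := by
    have := hkN 0 0 h0 h0
    simpa using this
  have hkNmem : k ∉ N := fun h => hkN k 0 h h0 (by simp)
  have hnkN : -k ∉ N := fun h => hkN 0 (-k) h0 h (by simp)
  set c : Cell d → Q := fun i =>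
    if h : i - k ∈ N then ℓ ⟨i - k, h⟩
    else if h : i ∈ N then ℓ ⟨i, h⟩ else ℓ ⟨0, h0⟩ with hc
  have fact0 : ∀ n : ↥N, c ((0 : Cell d) + n.1) = ℓ n := by
    rintro ⟨n, hn⟩
    have h1 : (0 : Cell d) + n - k ∉ N := by
      intro h
      exact hkN n (0 + n - k) hn h (by abel)
    simp only [hc]
    rw [dif_neg h1, dif_pos (by simpa using hn)]
    congr 1
    ext
    simp
  have factk : ∀ n : ↥N, c (k + n.1) = ℓ n := by
    rintro ⟨n, hn⟩
    have h1 : k + n - k ∈ N := by simpa using hn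
    simp only [hc]
    rw [dif_pos h1]
    congr 1
    ext
    simp [add_sub_cancel_left]
  have e1 : ∀ (f : Cell d → Q) (a i : Cell d), i ≠ a → step N δ {a} f i = f i := by
    intro f a i h
    simp [step, h]
  have e2 : ∀ (f : Cell d → Q) (a : Cell d),
      step N δ {a} f a = δ (fun n => f (a + n.1)) := by
    intro f a
    simp [step]
  have hδ0 : δ (fun n : ↥N => c ((0 : Cell d) + n.1)) = δ ℓ := by
    congr 1; funext n; exact fact0 n
  have hδk : δ (fun n : ↥N => c (k + n.1)) = δ ℓ := by
    congr 1; funext n; exact factk n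
  refine ⟨step N δ {k} c, step N δ {0} c, 0, k, ?_, ?_⟩
  · intro h
    have h2 := congrFun h 0
    rw [e1 c k 0 (Ne.symm hk0), e2 c 0, hδ0] at h2
    have hc0 : c 0 = ℓ ⟨0, h0⟩ := by simpa using fact0 ⟨0, h0⟩
    rw [hc0] at h2
    exact hℓ h2.symm
  · funext i
    by_cases hi0 : i = 0
    · subst hi0
      rw [e2 (step N δ {k} c) 0, e1 (step N δ {0} c) k 0 (Ne.symm hk0), e2 c 0, hδ0]
      have hA : (fun n : ↥N => step N δ {k} c ((0 : Cell d) + n.1)) = ℓ := by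
        funext n
        rw [e1 c k _ (by
          rw [zero_add]; intro h; exact hkNmem (h ▸ n.2))]
        exact fact0 n
      rw [hA]
    · by_cases hik : i = k
      · rw [hik]
        rw [e1 (step N δ {k} c) 0 k (hik ▸ hi0), e2 c k, hδk,
          e2 (step N δ {0} c) k]
        have hB : (fun n : ↥N => step N δ {0} c (k + n.1)) = ℓ := by
          funext n
          rw [e1 c 0 _ (by
            intro h
            apply hnkN
            have : n.1 = -k := by
              have := congrArg (fun x => x - k) h
              simpa [add_sub_cancel_left] using this
            exact this ▸ n.2)]
          exact factk n
        rw [hB]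
      · rw [e1 (step N δ {k} c) 0 i hi0, e1 (step N δ {0} c) k i hik,
          e1 c k i hik, e1 c 0 i hi0]
end
end

section
/- Two purely asynchronous cellular automata C = (R, N, Q, δ) and G = (R, M, Q, γ) are inverse to each other (i.e., for all configurations c, c': (∃A ⊆ R, c' = Δ_A(c)) ⇔ (∃A' ⊆ R, c = Γ_{A'}(c'))) if and only if for every pair of configurations c, c' with nonempty difference set D_{c,c'} = {i ∈ R : c(i) ≠ c'(i)}, we have c' = Δ_{D_{c,c'}}(c) ⇔ c = Γ_{D_{c,c'}}(c'). -/
noncomputable section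
open scoped Classical

lemma step_empty {d : ℕ} {Q : Type*} (N : Finset (Cell d)) (δ : (↥N → Q) → Q)
    (c : Cell d → Q) : step N δ (∅ : Set (Cell d)) c = c := by
  funext i; simp [step]

lemma diffSet_comm {d : ℕ} {Q : Type*} (c c' : Cell d → Q) :
    diffSet c c' = diffSet c' c := by
  ext i; exact ne_comm

lemma step_diffSet {d : ℕ} {Q : Type*} {N : Finset (Cell d)} {δ : (↥N → Q) → Q}
    {A : Set (Cell d)} {c c' : Cell d → Q} (h : c' = step N δ A c) :
    c' = step N δ (diffSet c c') c := by
  funext i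
  by_cases hi : i ∈ diffSet c c'
  · have hA : i ∈ A := by
      by_contra hA
      have := congrFun h i
      simp [step, hA] at this
      exact hi this.symm
    have := congrFun h i
    simp [step, hA] at this
    simp [step, hi, this]
  · have : c i = c' i := not_not.mp hi
    simp [step, hi, this]

/-- Characterization of purely asynchronous inverses via difference sets. -/
theorem pure_inverse_characterization {d : ℕ} {Q : Type*}
    (N M : Finset (Cell d)) (δ : (↥N → Q) → Q) (γ : (↥M → Q) → Q) :
    PureInverse N M δ γ ↔
      ∀ c c' : Cell d → Q, diffSet c c' ≠ ∅ →
        (c' = step N δ (diffSet c c') c ↔ c = step M γ (diffSet c c') c') := by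
  constructor
  · intro H c c' _
    constructor
    · intro h
      obtain ⟨A, hA⟩ := (H c c').mp ⟨_, h⟩
      have := step_diffSet hA
      rwa [← diffSet_comm] at this
    · intro h
      rw [diffSet_comm] at h
      obtain ⟨A, hA⟩ := (H c c').mpr ⟨_, h⟩
      exact step_diffSet hA
  · intro H c c'
    by_cases hD : diffSet c c' = ∅
    · have hcc : c = c' := by
        funext i
        by_contra hi
        exact absurd hD (Set.nonempty_iff_ne_empty.mp ⟨i, hi⟩)
      subst hcc
      constructor
      · intro _; exact ⟨∅, (step_empty M γ c).symm⟩
      · intro _; exact ⟨∅, (step_empty N δ c).symm⟩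
    · constructor
      · rintro ⟨A, hA⟩
        exact ⟨_, (H c c' hD).mp (step_diffSet hA)⟩
      · rintro ⟨A, hA⟩
        have h := step_diffSet hA
        rw [← diffSet_comm] at h
        exact ⟨_, (H c c' hD).mpr h⟩
end
end

section
/- Two fully asynchronous cellular automata C = (R, N, Q, δ) and G = (R, M, Q, γ) are inverse to each other (i.e., for all c, c': (∃a ∈ R, c' = Δ_{{a}}(c)) ⇔ (∃a' ∈ R, c = Γ_{{a'}}(c'))) if and only if: (1) for every pair c, c' whose difference set is exactly a singleton {a}, c' = Δ_{{a}}(c) ⇔ c = Γ_{{a}}(c'); and (2) for every configuration c, (∃a ∈ R, c = Δ_{{a}}(c)) ⇔ (∃a' ∈ R, c = Γ_{{a'}}(c)). -/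
noncomputable section
open scoped Classical

lemma step_apply_ne {d : ℕ} {Q : Type*} (N : Finset (Cell d)) (δ : (↥N → Q) → Q)
    (a : Cell d) (c : Cell d → Q) {i : Cell d} (h : i ≠ a) :
    step N δ {a} c i = c i := by
  simp [step, h]

lemma diffSet_eq_singleton {d : ℕ} {Q : Type*} {c c' : Cell d → Q} {a : Cell d}
    (hne : c ≠ c') (h : ∀ i, i ≠ a → c i = c' i) : diffSet c c' = {a} := by
  have ha : c a ≠ c' a := fun heq => hne (funext fun j => by
    by_cases hj : j = a
    · subst hj; exact heq
    · exact h j hj)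
  ext i
  simp only [diffSet, Set.mem_setOf_eq, Set.mem_singleton_iff]
  constructor
  · intro hi
    by_contra hia
    exact hi (h i hia)
  · rintro rfl
    exact ha

/-- Characterization of fully asynchronous inverses. -/
theorem full_inverse_characterization {d : ℕ} {Q : Type*}
    (N M : Finset (Cell d)) (δ : (↥N → Q) → Q) (γ : (↥M → Q) → Q) :
    FullInverse N M δ γ ↔
      ((∀ (c c' : Cell d → Q) (a : Cell d), diffSet c c' = {a} →
          (c' = step N δ {a} c ↔ c = step M γ {a} c')) ∧
       (∀ c : Cell d → Q,
          (∃ a : Cell d, c = step N δ {a} c) ↔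
          (∃ a' : Cell d, c = step M γ {a'} c))) := by
  constructor
  · intro FI
    constructor
    · intro c c' a hd
      have ha : c a ≠ c' a := by
        have : a ∈ diffSet c c' := hd ▸ Set.mem_singleton a
        exact this
      constructor
      · intro h
        obtain ⟨a', ha'⟩ := (FI c c').mp ⟨a, h⟩
        by_cases hE : a' = a
        · exact hE ▸ ha'
        · exfalso
          have hca : c a = c' a := by
            have := congrFun ha' a
            rw [step_apply_ne M γ a' c' (fun h => hE h.symm)] at this
            exact this
          exact ha hca
      · intro h
        obtain ⟨a', ha'⟩ := (FI c c').mpr ⟨a, h⟩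
        by_cases hE : a' = a
        · exact hE ▸ ha'
        · exfalso
          have : c' a = c a := by
            have := congrFun ha' a
            rw [step_apply_ne N δ a' c (i := a) (fun h => hE h.symm)] at this
            exact this
          exact ha this.symm
    · intro c
      exact FI c c
  · rintro ⟨h1, h2⟩ c c'
    constructor
    · rintro ⟨a, rfl⟩
      by_cases hE : c = step N δ {a} c
      · obtain ⟨a', ha'⟩ := (h2 c).mp ⟨a, hE⟩
        exact ⟨a', by rw [← hE]; exact ha'⟩
      · have hd : diffSet c (step N δ {a} c) = {a} :=
          diffSet_eq_singleton hE (fun i hi => (step_apply_ne N δ a c hi).symm)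
        exact ⟨a, (h1 c _ a hd).mp rfl⟩
    · rintro ⟨a, rfl⟩
      by_cases hE : c' = step M γ {a} c'
      · obtain ⟨a', ha'⟩ := (h2 c').mpr ⟨a, hE⟩
        exact ⟨a', by rw [← hE]; exact ha'⟩
      · have hd : diffSet (step M γ {a} c') c' = {a} := by
          apply diffSet_eq_singleton
          · intro h; exact hE h.symm
          · intro i hi; exact step_apply_ne M γ a c' hi
        exact ⟨a, (h1 _ c' a hd).mpr rfl⟩
end
end

section
/- If two purely (or fully) asynchronous cellular automata C = (R, N, Q, δ) and G = (R, M, Q, γ) are inverse to each other and both have minimal neighborhoods (no dummy neighbors), then N = M. -/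
noncomputable section
open scoped Classical

/-- A CA has minimal neighborhood if it has no dummy neighbors. -/
def MinimalNeighborhood {d : ℕ} {Q : Type*} (N : Finset (Cell d))
    (δ : (↥N → Q) → Q) : Prop :=
  ∀ n : ↥N, ∃ ℓ ℓ' : ↥N → Q,
    (∀ k : ↥N, k ≠ n → ℓ k = ℓ' k) ∧ ℓ n ≠ ℓ' n ∧ δ ℓ ≠ δ ℓ'

/-- Update a configuration at the origin. -/
private def upd {d : ℕ} {Q : Type*} (c : Cell d → Q) (v : Q) : Cell d → Q :=
  fun x => if x = 0 then v else c x

private lemma upd_zero {d : ℕ} {Q : Type*} (c : Cell d → Q) (v : Q) :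
    upd c v 0 = v := if_pos rfl

private lemma upd_ne {d : ℕ} {Q : Type*} (c : Cell d → Q) (v : Q) {x : Cell d}
    (hx : x ≠ 0) : upd c v x = c x := if_neg hx

/-- A single-cell step at the origin is an `upd`. -/
private lemma step_zero {d : ℕ} {Q : Type*} (M : Finset (Cell d))
    (γ : (↥M → Q) → Q) (c : Cell d → Q) :
    step M γ {(0 : Cell d)} c = upd c (γ (fun m => c m.1)) := by
  funext x
  by_cases hx : x = 0 <;> simp [step, upd, hx]

/-- Extend a local configuration by the background value `b`. -/
private def extcfg {d : ℕ} {Q : Type*} (N : Finset (Cell d)) (b : Q)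
    (ℓ₀ : ↥N → Q) : Cell d → Q :=
  fun x => if h : x ∈ N then ℓ₀ ⟨x, h⟩ else b

private lemma extcfg_read {d : ℕ} {Q : Type*} (N : Finset (Cell d)) (b : Q)
    (ℓ₀ : ↥N → Q) : (fun k : ↥N => extcfg N b ℓ₀ k.1) = ℓ₀ := by
  funext k; simp [extcfg, k.2]

private lemma extcfg_mem {d : ℕ} {Q : Type*} {N : Finset (Cell d)} (b : Q)
    (ℓ₀ : ↥N → Q) {x : Cell d} (h : x ∈ N) : extcfg N b ℓ₀ x = ℓ₀ ⟨x, h⟩ :=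
  dif_pos h

private lemma extcfg_not_mem {d : ℕ} {Q : Type*} {N : Finset (Cell d)} (b : Q)
    (ℓ₀ : ↥N → Q) {x : Cell d} (h : x ∉ N) : extcfg N b ℓ₀ x = b :=
  dif_neg h

private lemma core {d : ℕ} {Q : Type*} (N M : Finset (Cell d))
    (δ : (↥N → Q) → Q) (γ : (↥M → Q) → Q)
    (inv1 : ∀ (c : Cell d → Q) (a : Cell d), ∃ S : Set (Cell d),
      c = step M γ S (step N δ {a} c))
    (inv2 : ∀ (c : Cell d → Q) (a : Cell d), ∃ S : Set (Cell d),
      c = step N δ S (step M γ {a} c))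
    (hN : MinimalNeighborhood N δ) :
    ∀ n : ↥N, (n : Cell d) ∈ M := by
  intro n
  by_contra hnM
  obtain ⟨ℓ, ℓ', heq, hne, hδ⟩ := hN n
  -- forward pinning of γ
  have pin1 : ∀ c : Cell d → Q, δ (fun k => c k.1) ≠ c 0 →
      γ (fun m => upd c (δ (fun k => c k.1)) m.1) = c 0 := by
    intro c h
    obtain ⟨S, hS⟩ := inv1 c 0
    rw [step_zero] at hS
    have h0 := congrFun hS 0
    simp only [step, zero_add] at h0
    by_cases h0S : (0 : Cell d) ∈ S
    · rw [if_pos h0S] at h0; exact h0.symm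
    · rw [if_neg h0S, upd_zero] at h0; exact absurd h0.symm h
  -- backward pinning of δ
  have pin2 : ∀ c : Cell d → Q, γ (fun m => c m.1) ≠ c 0 →
      δ (fun k => upd c (γ (fun m => c m.1)) k.1) = c 0 := by
    intro c h
    obtain ⟨S, hS⟩ := inv2 c 0
    rw [step_zero] at hS
    have h0 := congrFun hS 0
    simp only [step, zero_add] at h0
    by_cases h0S : (0 : Cell d) ∈ S
    · rw [if_pos h0S] at h0; exact h0.symm
    · rw [if_neg h0S, upd_zero] at h0; exact absurd h0.symm h
  have hoff : ∀ (b : Q) (x : Cell d), x ≠ (n : Cell d) →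
      extcfg N b ℓ x = extcfg N b ℓ' x := by
    intro b x hx
    by_cases h : x ∈ N
    · rw [extcfg_mem b ℓ h, extcfg_mem b ℓ' h]
      exact heq _ (fun hc => hx (congrArg Subtype.val hc))
    · rw [extcfg_not_mem b ℓ h, extcfg_not_mem b ℓ' h]
  by_cases hn0 : (n : Cell d) = 0
  · -- case n = 0 : γ at the origin cannot see the origin (0 ∉ M)
    have h0M : (0 : Cell d) ∉ M := hn0 ▸ hnM
    have h0N : (0 : Cell d) ∈ N := hn0 ▸ n.2
    have hzn : (⟨0, h0N⟩ : ↥N) = n := Subtype.ext hn0.symm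
    set c : Cell d → Q := extcfg N (δ ℓ) ℓ with hc
    set c' : Cell d → Q := extcfg N (δ ℓ) ℓ' with hc'
    have hc0 : c 0 = ℓ n := by rw [hc, extcfg_mem _ _ h0N, hzn]
    have hc'0 : c' 0 = ℓ' n := by rw [hc', extcfg_mem _ _ h0N, hzn]
    have hreadc : (fun k : ↥N => c k.1) = ℓ := by rw [hc]; exact extcfg_read _ _ _
    have hreadc' : (fun k : ↥N => c' k.1) = ℓ' := by rw [hc']; exact extcfg_read _ _ _
    have hoff0 : ∀ x : Cell d, x ≠ 0 → c x = c' x := by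
      intro x hx
      rw [hc, hc']
      exact hoff (δ ℓ) x (fun h => hx (h.trans hn0))
    have hMeq : (fun m : ↥M => c m.1) = (fun m : ↥M => c' m.1) := by
      funext m
      exact hoff0 m.1 (fun h => h0M (h ▸ m.2))
    -- forward pinning specialised using 0 ∉ M
    have fwd : ∀ e : Cell d → Q, δ (fun k => e k.1) ≠ e 0 →
        γ (fun m => e m.1) = e 0 := by
      intro e h
      have hp := pin1 e h
      have hpat : (fun m : ↥M => upd e (δ (fun k => e k.1)) m.1)
          = fun m : ↥M => e m.1 := by
        funext m
        exact upd_ne _ _ (fun h => h0M (h ▸ m.2))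
      rwa [hpat] at hp
    by_cases hua : γ (fun m : ↥M => c m.1) = c 0
    · -- the γ-value is ℓ n
      have hδ'c : δ ℓ' = ℓ' n := by
        by_contra h
        have h1 := fwd c' (by rw [hreadc', hc'0]; exact h)
        rw [← hMeq] at h1
        exact hne (by rw [← hc0, ← hc'0]; exact hua.symm.trans h1)
      have hune : γ (fun m : ↥M => c' m.1) ≠ c' 0 := by
        rw [← hMeq, hua, hc0, hc'0]; exact hne
      have h2 := pin2 c' hune
      have hupdc : upd c' (γ (fun m : ↥M => c' m.1)) = c := by
        funext x
        by_cases hx : x = 0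
        · rw [hx, upd_zero, ← hMeq, hua]
        · rw [upd_ne _ _ hx]; exact (hoff0 x hx).symm
      rw [hupdc, hreadc, hc'0] at h2
      exact hδ (h2.trans hδ'c.symm)
    · by_cases hua' : γ (fun m : ↥M => c m.1) = c' 0
      · -- the γ-value is ℓ' n : symmetric
        have h2 := pin2 c hua
        have hupdc : upd c (γ (fun m : ↥M => c m.1)) = c' := by
          funext x
          by_cases hx : x = 0
          · rw [hx, upd_zero, hua']
          · rw [upd_ne _ _ hx]; exact hoff0 x hx
        rw [hupdc, hreadc', hc0] at h2
        have hδc : δ ℓ = ℓ n := by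
          by_contra h
          have h1 := fwd c (by rw [hreadc, hc0]; exact h)
          exact hua h1
        exact hδ (hδc.trans h2.symm)
      · -- the γ-value differs from both centers
        have h2 := pin2 c hua
        have h3 := pin2 c' (by rw [← hMeq]; exact hua')
        have hsame : upd c (γ (fun m : ↥M => c m.1))
            = upd c' (γ (fun m : ↥M => c' m.1)) := by
          funext x
          by_cases hx : x = 0
          · rw [hx, upd_zero, upd_zero, hMeq]
          · rw [upd_ne _ _ hx, upd_ne _ _ hx]; exact hoff0 x hx
        rw [hsame] at h2
        exact hne (by rw [← hc0, ← hc'0]; exact h2.symm.trans h3)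
  · -- case n ≠ 0
    have caseA : ∀ c c' : Cell d → Q,
        (∀ x : Cell d, x ≠ (n : Cell d) → c x = c' x) →
        δ (fun k => c k.1) ≠ δ (fun k => c' k.1) →
        δ (fun k => c k.1) ≠ c 0 → False := by
      intro c c' hof hδne hpin
      have hγ := pin1 c hpin
      have hpat : (fun m : ↥M => upd c' (δ (fun k => c k.1)) m.1)
          = (fun m : ↥M => upd c (δ (fun k => c k.1)) m.1) := by
        funext m
        by_cases hm0 : (m : Cell d) = 0
        · rw [hm0, upd_zero, upd_zero]
        · rw [upd_ne _ _ hm0, upd_ne _ _ hm0]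
          exact (hof _ (fun h => hnM (h ▸ m.2))).symm
      have hinvstep : step M γ {(0 : Cell d)}
          (upd c' (δ (fun k => c k.1))) = c' := by
        rw [step_zero]
        funext x
        by_cases hx : x = 0
        · rw [hx, upd_zero, hpat, hγ]
          exact hof 0 (Ne.symm hn0)
        · rw [upd_ne _ _ hx, upd_ne _ _ hx]
      obtain ⟨S, hS⟩ := inv2 (upd c' (δ (fun k => c k.1))) 0
      rw [hinvstep] at hS
      have h0 := congrFun hS 0
      simp only [step, zero_add] at h0
      rw [upd_zero] at h0
      by_cases h0S : (0 : Cell d) ∈ S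
      · rw [if_pos h0S] at h0
        exact hδne h0
      · rw [if_neg h0S] at h0
        exact hpin (h0.trans (hof 0 (Ne.symm hn0)).symm)
    by_cases hp : δ ℓ = extcfg N (δ ℓ') ℓ 0
    · -- then 0 ∈ N and δ ℓ equals the state at the origin; swap ℓ and ℓ'
      have h0N : (0 : Cell d) ∈ N := by
        by_contra h0N
        rw [extcfg_not_mem _ _ h0N] at hp
        exact hδ hp
      have hz : (⟨0, h0N⟩ : ↥N) ≠ n := fun hc => hn0 (congrArg Subtype.val hc).symm
      have hp₂ : δ ℓ' ≠ extcfg N (δ ℓ) ℓ' 0 := by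
        rw [extcfg_mem _ _ h0N, ← heq _ hz]
        rw [extcfg_mem _ _ h0N] at hp
        rw [← hp]
        exact hδ.symm
      exact caseA (extcfg N (δ ℓ) ℓ') (extcfg N (δ ℓ) ℓ)
        (fun x hx => (hoff (δ ℓ) x hx).symm)
        (by rw [extcfg_read, extcfg_read]; exact hδ.symm)
        (by rw [extcfg_read]; exact hp₂)
    · exact caseA (extcfg N (δ ℓ') ℓ) (extcfg N (δ ℓ') ℓ')
        (hoff (δ ℓ'))
        (by rw [extcfg_read, extcfg_read]; exact hδ)
        (by rw [extcfg_read]; exact hp)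

/-- Two inverse purely or fully asynchronous CAs with minimal neighborhoods
have the same neighborhood. -/
theorem inverse_minimal_same_neighborhood {d : ℕ} {Q : Type*} (hd : 0 < d)
    (N M : Finset (Cell d)) (δ : (↥N → Q) → Q) (γ : (↥M → Q) → Q)
    (hN : MinimalNeighborhood N δ) (hM : MinimalNeighborhood M γ)
    (hinv : PureInverse N M δ γ ∨ FullInverse N M δ γ) :
    N = M := by
  have inv1 : ∀ (c : Cell d → Q) (a : Cell d), ∃ S : Set (Cell d),
      c = step M γ S (step N δ {a} c) := by
    intro c a
    rcases hinv with h | h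
    · exact (h c (step N δ {a} c)).mp ⟨{a}, rfl⟩
    · obtain ⟨b, hb⟩ := (h c (step N δ {a} c)).mp ⟨a, rfl⟩
      exact ⟨{b}, hb⟩
  have inv2 : ∀ (c : Cell d → Q) (a : Cell d), ∃ S : Set (Cell d),
      c = step N δ S (step M γ {a} c) := by
    intro c a
    rcases hinv with h | h
    · exact (h (step M γ {a} c) c).mpr ⟨{a}, rfl⟩
    · obtain ⟨b, hb⟩ := (h (step M γ {a} c) c).mpr ⟨a, rfl⟩
      exact ⟨{b}, hb⟩
  exact Finset.Subset.antisymm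
    (fun x hx => core N M δ γ inv1 inv2 hN ⟨x, hx⟩)
    (fun x hx => core M N γ δ inv2 inv1 hM ⟨x, hx⟩)
end
end

section
/- For every invertible purely asynchronous cellular automaton C = (R, N, Q, δ) there exists an inverse purely asynchronous cellular automaton with the same neighborhood N. -/
noncomputable section
open scoped Classical

/-- Every invertible purely asynchronous CA has an inverse with the same
neighborhood. -/
theorem inverse_with_same_neighborhood {d : ℕ} {Q : Type*} (hd : 0 < d)
    (N : Finset (Cell d)) (δ : (↥N → Q) → Q)
    (hinv : ∃ (M : Finset (Cell d)) (γ : (↥M → Q) → Q), PureInverse N M δ γ) :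
    ∃ γ : (↥N → Q) → Q, PureInverse N N δ γ := by
  classical
  obtain ⟨M, γ, hγ⟩ := hinv
  -- pointwise characterization of the asynchronous global step
  have H1 : ∀ (ν : Finset (Cell d)) (f : (↥ν → Q) → Q) (c c' : Cell d → Q),
      (∃ A : Set (Cell d), c' = step ν f A c) ↔
        ∀ i, c' i = c i ∨ c' i = f (fun n => c (i + n.1)) := by
    intro ν f c c'
    constructor
    · rintro ⟨A, rfl⟩ i
      by_cases hi : i ∈ A
      · exact Or.inr (by simp [step, hi])
      · exact Or.inl (by simp [step, hi])
    · intro h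
      refine ⟨{i | c' i = f fun n => c (i + n.1)}, funext fun i => ?_⟩
      by_cases hi : c' i = f fun n => c (i + n.1)
      · simpa [step, hi] using hi
      · have h' : c' i = c i := (h i).resolve_right hi
        have hi' : ¬c i = f fun n => c (i + n.1) := by rw [← h']; exact hi
        simp [step, hi', h']
  -- single-cell predecessor characterization, via the inverse CA (M, γ)
  have H2 : ∀ (c' : Cell d → Q) (i : Cell d) (q : Q),
      ((q = c' i ∨ c' i = δ fun n : ↥N => if (n : Cell d) = 0 then q else c' (i + n.1)) ↔
        (q = c' i ∨ q = γ fun m => c' (i + m.1))) := by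
    intro c' i q
    set c : Cell d → Q := fun j => if j = i then q else c' j with hc
    have hci : c i = q := if_pos rfl
    have hcj : ∀ j, j ≠ i → c j = c' j := fun j h => if_neg h
    have hpat : (fun n : ↥N => c (i + n.1)) =
        fun n : ↥N => if (n : Cell d) = 0 then q else c' (i + n.1) := by
      funext n
      by_cases hn : (n : Cell d) = 0
      · rw [if_pos hn, hn, add_zero]; exact hci
      · rw [if_neg hn]
        refine hcj _ ?_
        simpa [add_eq_left] using hn
    constructor
    · intro h
      have hR : ∃ A : Set (Cell d), c' = step N δ A c := by
        rw [H1 N δ c c']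
        intro j
        by_cases hj : j = i
        · subst hj
          rcases h with h | h
          · exact Or.inl (by rw [hci]; exact h.symm)
          · exact Or.inr (by rw [hpat]; exact h)
        · exact Or.inl (hcj j hj).symm
      have h2 := (H1 M γ c' c).mp ((hγ c c').mp hR) i
      rw [hci] at h2
      exact h2
    · intro h
      have hR2 : ∃ A : Set (Cell d), c = step M γ A c' := by
        rw [H1 M γ c' c]
        intro j
        by_cases hj : j = i
        · subst hj; rw [hci]; exact h
        · exact Or.inl (hcj j hj)
      have h2 := (H1 N δ c c').mp ((hγ c c').mpr hR2) i
      rcases h2 with h' | h'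
      · exact Or.inl (by rw [h', hci])
      · exact Or.inr (by rw [← hpat]; exact h')
  by_cases h0 : (0 : Cell d) ∈ N
  · -- center is a neighbor
    set γA : (↥N → Q) → Q := fun p =>
      if h : ∃ q, q ≠ p ⟨0, h0⟩ ∧
          p ⟨0, h0⟩ = δ (fun n : ↥N => if (n : Cell d) = 0 then q else p n)
      then h.choose else p ⟨0, h0⟩ with hγA
    refine ⟨γA, ?_⟩
    have Huniq : ∀ (p : ↥N → Q) (q1 q2 : Q), q1 ≠ p ⟨0, h0⟩ → q2 ≠ p ⟨0, h0⟩ →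
        p ⟨0, h0⟩ = δ (fun n : ↥N => if (n : Cell d) = 0 then q1 else p n) →
        p ⟨0, h0⟩ = δ (fun n : ↥N => if (n : Cell d) = 0 then q2 else p n) → q1 = q2 := by
      intro p q1 q2 h1 h2 e1 e2
      set c' : Cell d → Q := fun j => if h : j ∈ N then p ⟨j, h⟩ else p ⟨0, h0⟩ with hc'
      have hc'n : ∀ n : ↥N, c' ((0 : Cell d) + n.1) = p n := by
        intro n; rw [zero_add]; exact dif_pos n.2
      have hc'0 : c' (0 : Cell d) = p ⟨0, h0⟩ := dif_pos h0
      have key : ∀ q, q ≠ p ⟨0, h0⟩ →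
          p ⟨0, h0⟩ = δ (fun n : ↥N => if (n : Cell d) = 0 then q else p n) →
          q = γ (fun m => c' ((0 : Cell d) + m.1)) := by
        intro q hq he
        have hpat2 : (fun n : ↥N => if (n : Cell d) = 0 then q else c' ((0 : Cell d) + n.1)) =
            fun n : ↥N => if (n : Cell d) = 0 then q else p n := by
          funext n
          by_cases hn : (n : Cell d) = 0
          · rw [if_pos hn, if_pos hn]
          · rw [if_neg hn, if_neg hn]; exact hc'n n
        have hl : q = c' (0 : Cell d) ∨
            c' (0 : Cell d) = δ fun n : ↥N => if (n : Cell d) = 0 then q else c' ((0 : Cell d) + n.1) := by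
          right
          rw [hc'0, hpat2]
          exact he
        rcases (H2 c' 0 q).mp hl with h | h
        · rw [hc'0] at h; exact absurd h hq
        · exact h
      rw [key q1 h1 e1, key q2 h2 e2]
    have key : ∀ (p : ↥N → Q) (q : Q),
        ((q = p ⟨0, h0⟩ ∨
            p ⟨0, h0⟩ = δ (fun n : ↥N => if (n : Cell d) = 0 then q else p n)) ↔
          (q = p ⟨0, h0⟩ ∨ q = γA p)) := by
      intro p q
      by_cases h : ∃ q', q' ≠ p ⟨0, h0⟩ ∧
          p ⟨0, h0⟩ = δ (fun n : ↥N => if (n : Cell d) = 0 then q' else p n)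
      · have hsp := h.choose_spec
        have e : γA p = h.choose := by rw [hγA]; exact dif_pos h
        constructor
        · rintro (hq | hq)
          · exact Or.inl hq
          · by_cases hqb : q = p ⟨0, h0⟩
            · exact Or.inl hqb
            · exact Or.inr ((Huniq p q h.choose hqb hsp.1 hq hsp.2).trans e.symm)
        · rintro (hq | hq)
          · exact Or.inl hq
          · right
            rw [hq, e]
            exact hsp.2
      · have e : γA p = p ⟨0, h0⟩ := by rw [hγA]; exact dif_neg h
        constructor
        · rintro (hq | hq)
          · exact Or.inl hq
          · by_cases hqb : q = p ⟨0, h0⟩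
            · exact Or.inl hqb
            · exact absurd ⟨q, hqb, hq⟩ h
        · rintro (hq | hq)
          · exact Or.inl hq
          · exact Or.inl (hq.trans e)
    intro c c'
    rw [hγ c c', H1 M γ c' c, H1 N γA c' c]
    refine forall_congr' fun i => ?_
    rw [← H2 c' i (c i)]
    have hk := key (fun n => c' (i + n.1)) (c i)
    simpa using hk
  · -- center is not a neighbor
    have hn0 : ∀ n : ↥N, (n : Cell d) ≠ 0 := fun n h => h0 (h ▸ n.2)
    have H2' : ∀ (c' : Cell d → Q) (i : Cell d) (q : Q),
        ((q = c' i ∨ c' i = δ fun n => c' (i + n.1)) ↔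
          (q = c' i ∨ q = γ fun m => c' (i + m.1))) := by
      intro c' i q
      have h := H2 c' i q
      have hpat : (fun n : ↥N => if (n : Cell d) = 0 then q else c' (i + n.1)) =
          fun n => c' (i + n.1) := funext fun n => if_neg (hn0 n)
      rwa [hpat] at h
    have L2 : ∀ (p : ↥N → Q) (q1 q2 : Q), q1 ≠ δ p → q2 ≠ δ p → q1 = q2 := by
      intro p q1 q2 h1 h2
      set c' : Cell d → Q := fun j => if h : j ∈ N then p ⟨j, h⟩ else δ p with hc'
      have hc'n : (fun n : ↥N => c' ((0 : Cell d) + n.1)) = p := by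
        funext n; rw [zero_add]; exact dif_pos n.2
      have hc'0 : c' (0 : Cell d) = δ p := dif_neg h0
      have key : ∀ q, q ≠ δ p → q = γ (fun m => c' ((0 : Cell d) + m.1)) := by
        intro q hq
        have hl : q = c' (0 : Cell d) ∨ c' (0 : Cell d) = δ fun n => c' ((0 : Cell d) + n.1) :=
          Or.inr (by rw [hc'0, hc'n])
        rcases (H2' c' 0 q).mp hl with h | h
        · rw [hc'0] at h; exact absurd h hq
        · exact h
      rw [key q1 h1, key q2 h2]
    set γB : (↥N → Q) → Q := fun p => if h : ∃ q, q ≠ δ p then h.choose else δ p with hγB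
    refine ⟨γB, ?_⟩
    have key : ∀ (p : ↥N → Q) (b q : Q), ((q = b ∨ b = δ p) ↔ (q = b ∨ q = γB p)) := by
      intro p b q
      by_cases h : ∃ q', q' ≠ δ p
      · have hsp := h.choose_spec
        have e : γB p = h.choose := by rw [hγB]; exact dif_pos h
        by_cases hb : b = δ p
        · constructor
          · intro _
            by_cases hq : q = δ p
            · exact Or.inl (hq.trans hb.symm)
            · exact Or.inr ((L2 p q h.choose hq hsp).trans e.symm)
          · intro _
            exact Or.inr hb
        · have hbc : b = h.choose := L2 p b h.choose hb hsp
          constructor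
          · rintro (hq | hq)
            · exact Or.inl hq
            · exact absurd hq hb
          · rintro (hq | hq)
            · exact Or.inl hq
            · exact Or.inl (hq.trans (e.trans hbc.symm))
      · push_neg at h
        constructor
        · intro _
          exact Or.inl ((h q).trans (h b).symm)
        · intro _
          exact Or.inl ((h q).trans (h b).symm)
    intro c c'
    rw [hγ c c', H1 M γ c' c, H1 N γB c' c]
    refine forall_congr' fun i => ?_
    rw [← H2' c' i (c i)]
    exact key (fun n => c' (i + n.1)) (c' i) (c i)
end
end

section
/- It is decidable whether a given purely asynchronous cellular automaton C = (Z^d, N, Q, δ) (with finite N and finite Q) is phase space invertible: it suffices to check, for each of the finitely many candidate local rules γ : Q^N → Q, whether for all finite configurations c, c' ∈ Q^({0} ∪ N ∪ (N+N)) with 0 ∈ D_{c,c'} ⊆ {0} ∪ N the equivalence c' = Δ_{D_{c,c'}}(c) ⇔ c = Γ_{D_{c,c'}}(c') holds on these cells. -/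
noncomputable section
open scoped Classical

/-- The finite test window `{0} ∪ N ∪ (N + N)`. -/
def testWindow {d : ℕ} (N : Finset (Cell d)) : Set (Cell d) :=
  {0} ∪ (↑N : Set (Cell d)) ∪ {x : Cell d | ∃ m ∈ N, ∃ n ∈ N, x = m + n}

section Aux
variable {d : ℕ} {Q : Type*}

/-- the local pattern seen by cell `j` in configuration `c`. -/
def patN (N : Finset (Cell d)) (c : Cell d → Q) (j : Cell d) : ↥N → Q :=
  fun n => c (j + n.1)

/-- substitute the value at the center (if `0 ∈ N`). -/
def patsub (N : Finset (Cell d)) (p : ↥N → Q) (q : Q) : ↥N → Q :=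
  fun n => if (n.1 : Cell d) = 0 then q else p n

lemma step_exists (N : Finset (Cell d)) (δ : (↥N → Q) → Q) (c c' : Cell d → Q) :
    (∃ A : Set (Cell d), c' = step N δ A c) ↔
      (∀ i, c i ≠ c' i → c' i = δ (patN N c i)) := by
  constructor
  · rintro ⟨A, rfl⟩ i hi
    by_cases hA : i ∈ A
    · show (if i ∈ A then δ (fun n => c (i + n.1)) else c i) = _
      rw [if_pos hA]; rfl
    · refine (hi ?_).elim
      show c i = (if i ∈ A then δ (fun n => c (i + n.1)) else c i)
      rw [if_neg hA]
  · intro h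
    refine ⟨diffSet c c', ?_⟩
    funext i
    by_cases hi : c i ≠ c' i
    · have hmem : i ∈ diffSet c c' := hi
      show c' i = (if i ∈ diffSet c c' then δ (fun n => c (i + n.1)) else c i)
      rw [if_pos hmem]; exact h i hi
    · have : i ∉ diffSet c c' := hi
      simp [step, this, not_not.mp hi]

lemma bridge (N : Finset (Cell d)) (ρ : (↥N → Q) → Q) (c c' : Cell d → Q)
    (D : Set (Cell d)) (hD : ∀ i, i ∈ D ↔ c i ≠ c' i)
    (hsub : D ⊆ {0} ∪ (↑N : Set (Cell d))) :
    (∀ i ∈ testWindow N, c' i = step N ρ D c i) ↔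
      (∀ i ∈ D, c' i = ρ (patN N c i)) := by
  constructor
  · intro h i hi
    have hw : i ∈ testWindow N := Or.inl (hsub hi)
    have := h i hw
    rwa [step, if_pos hi] at this
  · intro h i _
    by_cases hi : i ∈ D
    · rw [step, if_pos hi]; exact h i hi
    · rw [step, if_neg hi]
      exact (not_not.mp (fun hne => hi ((hD i).mpr hne))).symm

lemma patN_update (N : Finset (Cell d)) (c' : Cell d → Q) (j : Cell d) (q : Q) :
    patN N (Function.update c' j q) j = patsub N (patN N c' j) q := by
  funext n
  by_cases hn : (n.1 : Cell d) = 0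
  · have hj : j + n.1 = j := by rw [hn, add_zero]
    show Function.update c' j q (j + n.1) = _
    rw [hj, Function.update_self]
    simp [patsub, hn]
  · have : j + n.1 ≠ j := fun he => hn (by simpa using (add_eq_left.mp he))
    simp [patN, patsub, hn, Function.update_of_ne this]

lemma patsub_eq (N : Finset (Cell d)) (h0 : (0 : Cell d) ∉ N) (p : ↥N → Q) (q : Q) :
    patsub N p q = p := by
  funext n
  have : (n.1 : Cell d) ≠ 0 := fun h => h0 (h ▸ n.2)
  simp [patsub, this]

section GI
variable {N M : Finset (Cell d)} {δ : (↥N → Q) → Q} {γ : (↥M → Q) → Q}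

/-- From the global-inverse property: a valid singleton reverse step. -/
lemma sl2
    (GI : ∀ c c' : Cell d → Q,
      (∀ i, c i ≠ c' i → c' i = δ (patN N c i)) ↔
      (∀ i, c' i ≠ c i → c i = γ (patN M c' i)))
    (c' : Cell d → Q) (j : Cell d) (q : Q) (hq : q ≠ c' j)
    (hδ : c' j = δ (patN N (Function.update c' j q) j)) :
    q = γ (patN M c' j) := by
  set e := Function.update c' j q with he
  have hP : ∀ i, e i ≠ c' i → c' i = δ (patN N e i) := by
    intro i hi
    have hij : i = j := by
      by_contra h
      exact hi (Function.update_of_ne h q c')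
    subst hij
    exact hδ
  have hQ := (GI e c').mp hP
  have := hQ j (by rw [he, Function.update_self]; exact fun h => hq h.symm)
  rwa [he, Function.update_self] at this

/-- From the global-inverse property: differences can be reverted one by one. -/
lemma sl1
    (GI : ∀ c c' : Cell d → Q,
      (∀ i, c i ≠ c' i → c' i = δ (patN N c i)) ↔
      (∀ i, c' i ≠ c i → c i = γ (patN M c' i)))
    (c c' : Cell d → Q)
    (hP : ∀ i, c i ≠ c' i → c' i = δ (patN N c i))
    (j : Cell d) (hj : c j ≠ c' j) :
    c' j = δ (patN N (Function.update c' j (c j)) j) := by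
  have hQ := (GI c c').mp hP
  set e := Function.update c' j (c j) with he
  have hQe : ∀ i, c' i ≠ e i → e i = γ (patN M c' i) := by
    intro i hi
    have hij : i = j := by
      by_contra h
      exact hi (Function.update_of_ne h (c j) c').symm
    rw [hij, he, Function.update_self]
    exact hQ j (Ne.symm hj)
  have hPe := (GI e c').mpr hQe
  have := hPe j (by rw [he, Function.update_self]; exact hj)
  exact this

/-- If `0 ∉ N` and a global inverse exists, `Q` has at most two elements. -/
lemma no3
    (GI : ∀ c c' : Cell d → Q,
      (∀ i, c i ≠ c' i → c' i = δ (patN N c i)) ↔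
      (∀ i, c' i ≠ c i → c i = γ (patN M c' i)))
    (h0 : (0 : Cell d) ∉ N) (x a b : Q) (ha : a ≠ x) (hb : b ≠ x) :
    a = b := by
  set px : ↥N → Q := fun _ => x with hpx
  set v := δ px with hv
  set c'' : Cell d → Q := fun i => if i = 0 then v else x with hc''
  have hc0 : c'' 0 = v := by simp [hc'']
  have hne0 : ∀ n : ↥N, (n.1 : Cell d) ≠ 0 := fun n h => h0 (h ▸ n.2)
  have key : ∀ q : Q, q ≠ v → q = γ (patN M c'' 0) := by
    intro q hq
    apply sl2 GI c'' 0 q (by rw [hc0]; exact hq)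
    have hpat : patN N (Function.update c'' 0 q) 0 = px := by
      funext n
      have h1 : (0 : Cell d) + n.1 = n.1 := zero_add _
      have h2 : (n.1 : Cell d) ≠ 0 := hne0 n
      simp [patN, h1, Function.update_of_ne h2, hc'', h2, hpx]
    rw [hpat, hc0]
  by_cases hav : a = v <;> by_cases hbv : b = v
  · rw [hav, hbv]
  · have hxv : x ≠ v := fun h => ha (hav.trans h.symm)
    exact absurd ((key b hbv).trans (key x hxv).symm) hb
  · have hxv : x ≠ v := fun h => hb (hbv.trans h.symm)
    exact absurd ((key a hav).trans (key x hxv).symm) ha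
  · exact (key a hav).trans (key b hbv).symm

end GI
end Aux

/-- Decidability of phase space invertibility for purely asynchronous CAs:
a CA (with finitely many states) is invertible iff one of the finitely many
candidate local rules `γ : Q^N → Q` passes the finite check on the cells of
`{0} ∪ N ∪ (N + N)` for all pairs of configurations whose difference set
contains `0` and is contained in `{0} ∪ N` -- a condition depending only on
the finitely many states on the test window. -/
theorem pure_invertibility_decidable_check {d : ℕ} {Q : Type*}
    [Fintype Q] [DecidableEq Q] (hd : 0 < d)
    (N : Finset (Cell d)) (δ : (↥N → Q) → Q) :
    (∃ (M : Finset (Cell d)) (γ : (↥M → Q) → Q), PureInverse N M δ γ) ↔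
      (∃ γ : (↥N → Q) → Q, ∀ c c' : Cell d → Q,
        (0 : Cell d) ∈ diffSet c c' → diffSet c c' ⊆ {0} ∪ (↑N : Set (Cell d)) →
        ((∀ i ∈ testWindow N, c' i = step N δ (diffSet c c') c i) ↔
         (∀ i ∈ testWindow N, c i = step N γ (diffSet c c') c' i))) := by
  constructor
  · rintro ⟨M, γ, hMγ⟩
    have GI : ∀ c c' : Cell d → Q,
        (∀ i, c i ≠ c' i → c' i = δ (patN N c i)) ↔
        (∀ i, c' i ≠ c i → c i = γ (patN M c' i)) := fun c c' =>
      (step_exists N δ c c').symm.trans ((hMγ c c').trans (step_exists M γ c' c))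
    by_cases h0 : (0 : Cell d) ∈ N
    · -- the case where the center belongs to the neighborhood
      set γ0 : (↥N → Q) → Q := fun p =>
        if h : ∃ q, q ≠ p ⟨0, h0⟩ ∧ p ⟨0, h0⟩ = δ (patsub N p q) then h.choose
        else p ⟨0, h0⟩ with hγ0
      have hγ0pos : ∀ (p : ↥N → Q)
          (h : ∃ q, q ≠ p ⟨0, h0⟩ ∧ p ⟨0, h0⟩ = δ (patsub N p q)),
          γ0 p = h.choose := by
        intro p h
        rw [hγ0]
        exact dif_pos h
      have hγ0neg : ∀ (p : ↥N → Q),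
          ¬ (∃ q, q ≠ p ⟨0, h0⟩ ∧ p ⟨0, h0⟩ = δ (patsub N p q)) →
          γ0 p = p ⟨0, h0⟩ := by
        intro p h
        rw [hγ0]
        exact dif_neg h
      refine ⟨γ0, ?_⟩
      intro c c' h0D hsub
      rw [bridge N δ c c' (diffSet c c') (fun i => Iff.rfl) hsub,
          bridge N γ0 c' c (diffSet c c')
            (fun i => by simp only [diffSet, Set.mem_setOf_eq]; exact ne_comm) hsub]
      constructor
      · intro hP j hj
        have hjne : c j ≠ c' j := hj
        have hPf : ∀ i, c i ≠ c' i → c' i = δ (patN N c i) := fun i hi => hP i hi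
        have hsl := sl1 GI c c' hPf j hjne
        have hsl' : c' j = δ (patsub N (patN N c' j) (c j)) := by
          rwa [patN_update] at hsl
        have hp0 : (patN N c' j) ⟨0, h0⟩ = c' j := by
          show c' (j + 0) = c' j
          rw [add_zero]
        have hex : ∃ q, q ≠ (patN N c' j) ⟨0, h0⟩ ∧
            (patN N c' j) ⟨0, h0⟩ = δ (patsub N (patN N c' j) q) :=
          ⟨c j, by rw [hp0]; exact hjne, by rw [hp0]; exact hsl'⟩
        have hq0 := hex.choose_spec
        have e1 : hex.choose = γ (patN M c' j) := by
          apply sl2 GI c' j _ (by rw [← hp0]; exact hq0.1)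
          rw [patN_update, ← hp0]
          exact hq0.2
        have e2 : c j = γ (patN M c' j) := sl2 GI c' j _ hjne hsl
        rw [hγ0pos (patN N c' j) hex]
        exact e2.trans e1.symm
      · intro hQ'
        have hQf : ∀ i, c' i ≠ c i → c i = γ (patN M c' i) := by
          intro j hj'
          have hj : j ∈ diffSet c c' := Ne.symm hj'
          have hgj := hQ' j hj
          have hp0 : (patN N c' j) ⟨0, h0⟩ = c' j := by
            show c' (j + 0) = c' j
            rw [add_zero]
          by_cases hex : ∃ q, q ≠ (patN N c' j) ⟨0, h0⟩ ∧
              (patN N c' j) ⟨0, h0⟩ = δ (patsub N (patN N c' j) q)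
          · rw [hγ0pos (patN N c' j) hex] at hgj
            have hq0 := hex.choose_spec
            apply sl2 GI c' j (c j) (Ne.symm hj')
            rw [patN_update, hgj, ← hp0]
            exact hq0.2
          · rw [hγ0neg (patN N c' j) hex, hp0] at hgj
            exact absurd hgj.symm hj'
        have hPf := (GI c c').mpr hQf
        exact fun i hi => hPf i hi
    · -- the case where the center does not belong to the neighborhood
      set γ0 : (↥N → Q) → Q := fun p =>
        if h : ∃ q, q ≠ δ p then h.choose else δ p with hγ0
      have hγ0pos : ∀ (p : ↥N → Q) (h : ∃ q, q ≠ δ p), γ0 p = h.choose := by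
        intro p h
        rw [hγ0]
        exact dif_pos h
      refine ⟨γ0, ?_⟩
      intro c c' h0D hsub
      rw [bridge N δ c c' (diffSet c c') (fun i => Iff.rfl) hsub,
          bridge N γ0 c' c (diffSet c c')
            (fun i => by simp only [diffSet, Set.mem_setOf_eq]; exact ne_comm) hsub]
      constructor
      · intro hP j hj
        have hjne : c j ≠ c' j := hj
        have hsl := sl1 GI c c' (fun i hi => hP i hi) j hjne
        rw [patN_update, patsub_eq N h0] at hsl
        have hex : ∃ q, q ≠ δ (patN N c' j) := ⟨c j, by rw [← hsl]; exact hjne⟩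
        rw [hγ0pos (patN N c' j) hex]
        exact no3 GI h0 (δ (patN N c' j)) (c j) hex.choose
          (by rw [← hsl]; exact hjne) hex.choose_spec
      · intro hQ'
        have hQf : ∀ i, c' i ≠ c i → c i = γ (patN M c' i) := by
          intro j hj'
          have hj : j ∈ diffSet c c' := Ne.symm hj'
          have hgj := hQ' j hj
          by_cases hex : ∃ q, q ≠ δ (patN N c' j)
          · rw [hγ0pos (patN N c' j) hex] at hgj
            have hq0 : hex.choose ≠ δ (patN N c' j) := hex.choose_spec
            have hcj : c j ≠ δ (patN N c' j) := by rw [hgj]; exact hq0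
            have hcδ : c' j = δ (patN N c' j) :=
              no3 GI h0 (c j) (c' j) (δ (patN N c' j)) hj' (Ne.symm hcj)
            apply sl2 GI c' j (c j) (Ne.symm hj')
            rw [patN_update, patsub_eq N h0]
            exact hcδ
          · push_neg at hex
            exact absurd ((hex (c' j)).trans (hex (c j)).symm) hj'
        have hPf := (GI c c').mpr hQf
        exact fun i hi => hPf i hi
  · rintro ⟨γ', htest⟩
    refine ⟨N, γ', ?_⟩
    intro c c'
    rw [step_exists N δ c c', step_exists N γ' c' c]
    have hWmem : ∀ n : ↥N, (n.1 : Cell d) ∈ insert (0 : Cell d) N :=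
      fun n => Finset.mem_insert_of_mem n.2
    constructor
    · intro hP a ha'
      have ha : c a ≠ c' a := Ne.symm ha'
      let e' : Cell d → Q := fun i =>
        if c i ≠ c' i ∧ i - a ∈ insert (0 : Cell d) N then c' i else c i
      let u : Cell d → Q := fun i => c (i + a)
      let u' : Cell d → Q := fun i => e' (i + a)
      have hcond : ∀ i : Cell d,
          (c i ≠ c' i ∧ i - a ∈ insert (0 : Cell d) N) → e' i = c' i :=
        fun i h => if_pos h
      have hncond : ∀ i : Cell d,
          ¬ (c i ≠ c' i ∧ i - a ∈ insert (0 : Cell d) N) → e' i = c i :=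
        fun i h => if_neg h
      have hmemD : ∀ i : Cell d, i ∈ diffSet u u' ↔
          (c (i + a) ≠ c' (i + a) ∧ (i + a) - a ∈ insert (0 : Cell d) N) := by
        intro i
        constructor
        · intro h
          by_contra hc
          exact h (show u i = u' i from (hncond (i + a) hc).symm)
        · intro hc
          show u i ≠ u' i
          have h1 : u' i = c' (i + a) := hcond (i + a) hc
          rw [h1]
          exact hc.1
      have h0mem : (0 : Cell d) ∈ diffSet u u' := by
        rw [hmemD 0]
        refine ⟨by rwa [zero_add], ?_⟩
        rw [zero_add, sub_self]
        exact Finset.mem_insert_self _ _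
      have hsubD : diffSet u u' ⊆ {0} ∪ (↑N : Set (Cell d)) := by
        intro i hi
        have h2 := ((hmemD i).mp hi).2
        rw [add_sub_cancel_right] at h2
        rcases Finset.mem_insert.mp h2 with h | h
        · exact Set.mem_union_left _ (by simp [h])
        · exact Set.mem_union_right _ h
      have hiff := htest u u' h0mem hsubD
      rw [bridge N δ u u' (diffSet u u') (fun i => Iff.rfl) hsubD,
          bridge N γ' u' u (diffSet u u')
            (fun i => by simp only [diffSet, Set.mem_setOf_eq]; exact ne_comm) hsubD] at hiff
      have hPu : ∀ i ∈ diffSet u u', u' i = δ (patN N u i) := by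
        intro i hi
        have hc := (hmemD i).mp hi
        have h1 : u' i = c' (i + a) := hcond (i + a) hc
        rw [h1, hP (i + a) hc.1]
        congr 1
        funext n
        show c (i + a + n.1) = c (i + n.1 + a)
        rw [add_right_comm]
      have hQu := hiff.mp hPu 0 h0mem
      have hpat : patN N u' 0 = patN N c' a := by
        funext n
        show e' (0 + n.1 + a) = c' (a + n.1)
        rw [zero_add]
        by_cases hc : c (n.1 + a) ≠ c' (n.1 + a)
        · rw [hcond (n.1 + a) ⟨hc, by rw [add_sub_cancel_right]; exact hWmem n⟩,
            add_comm a n.1]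
        · rw [hncond (n.1 + a) (fun h => hc h.1), not_not.mp hc, add_comm a n.1]
      rw [hpat] at hQu
      have hu0 : u 0 = c a := by
        show c (0 + a) = c a
        rw [zero_add]
      rwa [hu0] at hQu
    · intro hQ a ha
      let e : Cell d → Q := fun i =>
        if c i ≠ c' i ∧ i - a ∈ insert (0 : Cell d) N then c i else c' i
      let u : Cell d → Q := fun i => e (i + a)
      let u' : Cell d → Q := fun i => c' (i + a)
      have hcond : ∀ i : Cell d,
          (c i ≠ c' i ∧ i - a ∈ insert (0 : Cell d) N) → e i = c i :=
        fun i h => if_pos h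
      have hncond : ∀ i : Cell d,
          ¬ (c i ≠ c' i ∧ i - a ∈ insert (0 : Cell d) N) → e i = c' i :=
        fun i h => if_neg h
      have hmemD : ∀ i : Cell d, i ∈ diffSet u u' ↔
          (c (i + a) ≠ c' (i + a) ∧ (i + a) - a ∈ insert (0 : Cell d) N) := by
        intro i
        constructor
        · intro h
          by_contra hc
          exact h (hncond (i + a) hc)
        · intro hc
          show u i ≠ u' i
          have h1 : u i = c (i + a) := hcond (i + a) hc
          rw [h1]
          exact hc.1
      have h0mem : (0 : Cell d) ∈ diffSet u u' := by
        rw [hmemD 0]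
        refine ⟨by rwa [zero_add], ?_⟩
        rw [zero_add, sub_self]
        exact Finset.mem_insert_self _ _
      have hsubD : diffSet u u' ⊆ {0} ∪ (↑N : Set (Cell d)) := by
        intro i hi
        have h2 := ((hmemD i).mp hi).2
        rw [add_sub_cancel_right] at h2
        rcases Finset.mem_insert.mp h2 with h | h
        · exact Set.mem_union_left _ (by simp [h])
        · exact Set.mem_union_right _ h
      have hiff := htest u u' h0mem hsubD
      rw [bridge N δ u u' (diffSet u u') (fun i => Iff.rfl) hsubD,
          bridge N γ' u' u (diffSet u u')
            (fun i => by simp only [diffSet, Set.mem_setOf_eq]; exact ne_comm) hsubD] at hiff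
      have hQu : ∀ i ∈ diffSet u u', u i = γ' (patN N u' i) := by
        intro i hi
        have hc := (hmemD i).mp hi
        have h1 : u i = c (i + a) := hcond (i + a) hc
        rw [h1, hQ (i + a) (Ne.symm hc.1)]
        congr 1
        funext n
        show c' (i + a + n.1) = c' (i + n.1 + a)
        rw [add_right_comm]
      have hPu := hiff.mpr hQu 0 h0mem
      have hpat : patN N u 0 = patN N c a := by
        funext n
        show e (0 + n.1 + a) = c (a + n.1)
        rw [zero_add]
        by_cases hc : c (n.1 + a) ≠ c' (n.1 + a)
        · rw [hcond (n.1 + a) ⟨hc, by rw [add_sub_cancel_right]; exact hWmem n⟩,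
            add_comm a n.1]
        · rw [hncond (n.1 + a) (fun h => hc h.1), ← not_not.mp hc, add_comm a n.1]
      rw [hpat] at hPu
      have hu0 : u' 0 = c' a := by
        show c' (0 + a) = c' a
        rw [zero_add]
      rwa [hu0] at hPu
end
end

section
/- Let C = (Z, N, Q, δ) be a one-dimensional cellular automaton with N ⊆ {−m,…,m}, N ≠ ∅. For any configuration c ∈ Q^Z there exists a 'spatially eventually periodic' configuration c' ∈ Q^Z agreeing with c on {β'−m, …, α'+m} (for suitable −|Q|^{2m+1} ≤ β' < α' ≤ |Q|^{2m+1} obtained by pigeonhole on windows of width 2m+1) such that every cell a' ∈ Z of c' observes the same local window as some cell a ∈ {β', …, α'} of c: c'[a'−m, a'+m] = c[a−m, a+m]. -/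
noncomputable section
open scoped Classical

/-- The global transition function `Δ_A` of a one-dimensional CA with
neighborhood `N ⊆ ℤ`, local rule `δ` and active cell set `A`. -/
def stepZ {Q : Type*} (N : Finset ℤ) (δ : (↥N → Q) → Q)
    (A : Set ℤ) (c : ℤ → Q) : ℤ → Q :=
  fun i => if i ∈ A then δ (fun n => c (i + n.1)) else c i

/-- The difference set `D_{c,c'}` of two global configurations. -/
def diffSetZ {Q : Type*} (c c' : ℤ → Q) : Set ℤ := {i | c i ≠ c' i}

/-- Two fully asynchronous one-dimensional CAs are inverse to each other. -/
def FullInverseZ {Q : Type*} (N M : Finset ℤ)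
    (δ : (↥N → Q) → Q) (γ : (↥M → Q) → Q) : Prop :=
  ∀ c c' : ℤ → Q,
    (∃ a : ℤ, c' = stepZ N δ {a} c) ↔ (∃ a : ℤ, c = stepZ M γ {a} c')

/-- The maximal distance `m` of a neighbor (`0` used in place of `-∞` for `N = ∅`). -/
def mrad (N : Finset ℤ) : ℕ := N.sup fun n => n.natAbs

/-- The finite set `𝒜` of active candidate cells:
`{-|Q|^(2m+1), …, |Q|^(2m+1)}`, or `{0}` when `N = ∅`. -/
def Acand (Q : Type*) [Fintype Q] (N : Finset ℤ) : Set ℤ :=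
  if N = ∅ then {0}
  else {a : ℤ | |a| ≤ (Fintype.card Q : ℤ) ^ (2 * mrad N + 1)}

/-!
With `K = |Q|^(2m+1)`, two of the `K + 1` cells of `{0, …, K}`, say `α < α'`, see the same
window of width `2m+1`; likewise two cells `β' < β` of `{-K, …, 0}`. The window equality makes
`c` periodic with period `α' - α` on `[α - m, α' + m]`, so repeating `c (α, α']` forever to the
right changes nothing on `(-∞, α' + m]` and gives every cell right of `α` the window of its
representative in `(α, α']`. The same construction to the left of `β'`, obtained by reflecting
`ℤ`, finishes the proof.
-/

section Windows

variable {Q : Type*}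

/-- The paper's `c[a-m, a+m] = d[b-m, b+m]`. -/
def SameWindow (m : ℕ) (c : ℤ → Q) (a : ℤ) (d : ℤ → Q) (b : ℤ) : Prop :=
  ∀ k : ℤ, |k| ≤ (m : ℤ) → c (a + k) = d (b + k)

theorem SameWindow.symm {m : ℕ} {c d : ℤ → Q} {a b : ℤ} (h : SameWindow m c a d b) :
    SameWindow m d b c a :=
  fun k hk => (h k hk).symm

theorem SameWindow.trans {m : ℕ} {c d e : ℤ → Q} {a b b' : ℤ} (h : SameWindow m c a d b)
    (h' : SameWindow m d b e b') : SameWindow m c a e b' :=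
  fun k hk => (h k hk).trans (h' k hk)

theorem exists_lt_sameWindow [Fintype Q] (c : ℤ → Q) (m : ℕ) (a : ℤ) :
    ∃ x y : ℤ, a ≤ x ∧ x < y ∧ y ≤ a + (Fintype.card Q : ℤ) ^ (2 * m + 1) ∧
      SameWindow m c x c y := by
  have hcard : (Finset.univ : Finset (Finset.Icc (-(m : ℤ)) m → Q)).card <
      (Finset.Icc a (a + (Fintype.card Q : ℤ) ^ (2 * m + 1))).card := by
    zify
    have hK : (0 : ℤ) ≤ (Fintype.card Q : ℤ) ^ (2 * m + 1) := by positivity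
    simp only [Finset.card_univ, Fintype.card_fun, Fintype.card_coe, Int.card_Icc, Nat.cast_pow]
    rw [show ((m : ℤ) + 1 - -m).toNat = 2 * m + 1 by omega, Int.toNat_of_nonneg (by omega)]
    omega
  obtain ⟨x, hx, y, hy, hxy, hwin⟩ := Finset.exists_ne_map_eq_of_card_lt_of_maps_to hcard
    (f := fun i (k : Finset.Icc (-(m : ℤ)) m) => c (i + k)) (fun _ _ => Finset.mem_univ _)
  have hsame : SameWindow m c x c y := fun k hk =>
    congrFun hwin ⟨k, Finset.mem_Icc.mpr (abs_le.mp hk)⟩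
  rw [Finset.mem_Icc] at hx hy
  rcases hxy.lt_or_gt with hlt | hlt
  · exact ⟨x, y, hx.1, hlt, hy.2, hsame⟩
  · exact ⟨y, x, hy.1, hlt, hx.2, hsame.symm⟩

theorem sameWindow_comp_neg {m : ℕ} {c d : ℤ → Q} {a b : ℤ} :
    SameWindow m (fun i => c (-i)) (-a) (fun i => d (-i)) (-b) ↔ SameWindow m c a d b := by
  refine ⟨fun h k hk => ?_, fun h k hk => ?_⟩ <;>
    simpa only [neg_add, neg_neg] using h (-k) (by rwa [abs_neg])

end Windows

section PeriodicExtension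

variable {Q : Type*} {c : ℤ → Q} {p lo hi : ℤ}

theorem eq_add_natCast_mul_of_periodicOn (hp : 0 ≤ p)
    (hper : ∀ i, lo ≤ i → i ≤ hi → c (i + p) = c i) {x : ℤ} (hx : lo ≤ x) :
    ∀ n : ℕ, x + n * p ≤ hi + p → c (x + n * p) = c x
  | 0, _ => by simp
  | n + 1, hxn => by
    have hnp : 0 ≤ (n : ℤ) * p := by positivity
    push_cast at hxn ⊢
    rw [add_one_mul, ← add_assoc, hper _ (by linarith) (by linarith)]
    exact eq_add_natCast_mul_of_periodicOn hp hper hx n (by linarith)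

theorem eq_add_mul_of_periodicOn (hp : 0 ≤ p)
    (hper : ∀ i, lo ≤ i → i ≤ hi → c (i + p) = c i) {x : ℤ} (n : ℤ)
    (hx : lo ≤ x) (hx' : x ≤ hi + p) (hxn : lo ≤ x + n * p) (hxn' : x + n * p ≤ hi + p) :
    c (x + n * p) = c x := by
  obtain ⟨k, rfl | rfl⟩ := Int.eq_nat_or_neg n
  · exact eq_add_natCast_mul_of_periodicOn hp hper hx k hxn'
  · have hback : x + -k * p + k * p = x := by ring
    have := eq_add_natCast_mul_of_periodicOn hp hper hxn k (by rwa [hback])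
    rw [hback] at this
    exact this.symm

noncomputable def extendPeriodicRight (c : ℤ → Q) (hp : 0 < p) (a : ℤ) : ℤ → Q :=
  fun i => if i ≤ a then c i else c (toIocMod hp a i)

variable {m : ℕ} {a : ℤ} (hp : 0 < p)

theorem extendPeriodicRight_eq_add_mul
    (hper : ∀ i, a - m ≤ i → i ≤ a + m → c (i + p) = c i) {x : ℤ} (n : ℤ) (hx : a - m ≤ x)
    (hxn : a - m ≤ x + n * p) (hxn' : x + n * p ≤ a + p + m) :
    extendPeriodicRight c hp a x = c (x + n * p) := by
  unfold extendPeriodicRight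
  split_ifs with hxa
  · exact (eq_add_mul_of_periodicOn hp.le hper n hx (by linarith) hxn (by linarith)).symm
  · obtain ⟨hr, hr'⟩ := toIocMod_mem_Ioc hp a x
    have hdecomp : toIocMod hp a x + toIocDiv hp a x * p = x := by
      simpa using toIocMod_add_toIocDiv_zsmul hp a x
    have hshift : toIocMod hp a x + (toIocDiv hp a x + n) * p = x + n * p := by
      rw [add_mul, ← add_assoc, hdecomp]
    rw [← hshift]
    exact (eq_add_mul_of_periodicOn hp.le hper _ (by linarith) (by linarith)
      (by linarith) (by linarith)).symm

theorem extendPeriodicRight_eq_self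
    (hper : ∀ i, a - m ≤ i → i ≤ a + m → c (i + p) = c i) {x : ℤ} (hx : x ≤ a + p + m) :
    extendPeriodicRight c hp a x = c x := by
  by_cases hxa : x ≤ a
  · exact if_pos hxa
  · simpa using extendPeriodicRight_eq_add_mul hp hper 0 (by omega) (by omega) (by omega)

theorem sameWindow_extendPeriodicRight
    (hper : ∀ i, a - m ≤ i → i ≤ a + m → c (i + p) = c i) {a' : ℤ} (ha' : a < a') :
    SameWindow m (extendPeriodicRight c hp a) a' c (toIocMod hp a a') := fun k hk => by
  obtain ⟨hr, hr'⟩ := toIocMod_mem_Ioc hp a a'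
  have hdecomp : toIocMod hp a a' + toIocDiv hp a a' * p = a' := by
    simpa using toIocMod_add_toIocDiv_zsmul hp a a'
  obtain ⟨hk, hk'⟩ := abs_le.mp hk
  have hshift : a' + k + -toIocDiv hp a a' * p = toIocMod hp a a' + k := by linarith
  rw [extendPeriodicRight_eq_add_mul hp hper (-toIocDiv hp a a') (by linarith) (by linarith)
    (by linarith), hshift]

end PeriodicExtension

section Extension

variable {Q : Type*} {m : ℕ} {c : ℤ → Q}

theorem exists_extension_right {α α' : ℤ} (hαα' : α < α') (hw : SameWindow m c α c α') :
    ∃ d : ℤ → Q, (∀ i, i ≤ α' + m → d i = c i) ∧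
      ∀ a', ∃ a, a ≤ α' ∧ (a = a' ∨ α < a) ∧ SameWindow m d a' c a := by
  have hp : 0 < α' - α := by omega
  have hper : ∀ i, α - m ≤ i → i ≤ α + m → c (i + (α' - α)) = c i := fun i hi hi' => by
    have := hw (i - α) (abs_le.mpr ⟨by omega, by omega⟩)
    rw [add_sub_cancel, show α' + (i - α) = i + (α' - α) by ring] at this
    exact this.symm
  have hagree : ∀ i, i ≤ α' + m → extendPeriodicRight c hp α i = c i := fun i hi =>
    extendPeriodicRight_eq_self hp hper (by omega)
  refine ⟨extendPeriodicRight c hp α, hagree, fun a' => ?_⟩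
  by_cases ha' : a' ≤ α
  · refine ⟨a', by omega, .inl rfl, fun k hk => hagree _ ?_⟩
    have := (abs_le.mp hk).2
    omega
  · obtain ⟨hr, hr'⟩ := toIocMod_mem_Ioc hp α a'
    exact ⟨_, by omega, .inr hr, sameWindow_extendPeriodicRight hp hper (not_le.mp ha')⟩

theorem exists_extension_left {β' β : ℤ} (hβ'β : β' < β) (hw : SameWindow m c β' c β) :
    ∃ d : ℤ → Q, (∀ i, β' - m ≤ i → d i = c i) ∧
      ∀ a', ∃ a, β' ≤ a ∧ SameWindow m d a' c a := by
  obtain ⟨d, hagree, hwin⟩ := exists_extension_right (c := fun i => c (-i)) (neg_lt_neg hβ'β)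
    (sameWindow_comp_neg.mpr hw.symm)
  refine ⟨fun i => d (-i), fun i hi => by simpa using hagree (-i) (by omega), fun a' => ?_⟩
  obtain ⟨a, ha, -, hsame⟩ := hwin (-a')
  refine ⟨-a, by omega, sameWindow_comp_neg.mp ?_⟩
  simpa only [neg_neg] using hsame

end Extension

theorem eventually_periodic_witness_general {Q : Type*} [Fintype Q]
    (m : ℕ) (c : ℤ → Q) :
    ∃ (c' : ℤ → Q) (β' α' : ℤ),
      -((Fintype.card Q : ℤ) ^ (2 * m + 1)) ≤ β' ∧ β' < α' ∧
      α' ≤ (Fintype.card Q : ℤ) ^ (2 * m + 1) ∧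
      (∀ i : ℤ, β' - m ≤ i → i ≤ α' + m → c' i = c i) ∧
      (∀ a' : ℤ, ∃ a : ℤ, β' ≤ a ∧ a ≤ α' ∧
        ∀ k : ℤ, |k| ≤ (m : ℤ) → c' (a' + k) = c (a + k)) := by
  obtain ⟨α, α', hα, hαα', hα', hwα⟩ := exists_lt_sameWindow c m 0
  obtain ⟨β', β, hβ', hβ'β, hβ, hwβ⟩ :=
    exists_lt_sameWindow c m (-(Fintype.card Q : ℤ) ^ (2 * m + 1))
  obtain ⟨c₁, hc₁, hwin₁⟩ := exists_extension_right hαα' hwα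
  have hwβ₁ : SameWindow m c₁ β' c₁ β := fun k hk => by
    have := (abs_le.mp hk).2
    rw [hc₁ _ (by omega), hc₁ _ (by omega)]
    exact hwβ k hk
  obtain ⟨c₂, hc₂, hwin₂⟩ := exists_extension_left hβ'β hwβ₁
  refine ⟨c₂, β', α', by omega, by omega, by omega,
    fun i hi hi' => (hc₂ i hi).trans (hc₁ i hi'), fun a' => ?_⟩
  obtain ⟨a₁, ha₁, hw₁⟩ := hwin₂ a'
  obtain ⟨a, ha, ha₁a, hw⟩ := hwin₁ a₁
  exact ⟨a, by omega, ha, hw₁.trans hw⟩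

/-- For any configuration `c` there is a spatially eventually periodic
configuration `c'` agreeing with `c` on `{β'−m, …, α'+m}` such that every cell
of `c'` observes the same local window as some cell `a ∈ {β', …, α'}` of `c`. -/
theorem eventually_periodic_witness {Q : Type*} [Fintype Q]
    (N : Finset ℤ) (hN : N.Nonempty) (m : ℕ) (hNm : ∀ n ∈ N, n.natAbs ≤ m)
    (c : ℤ → Q) :
    ∃ (c' : ℤ → Q) (β' α' : ℤ),
      -((Fintype.card Q : ℤ) ^ (2 * m + 1)) ≤ β' ∧ β' < α' ∧
      α' ≤ (Fintype.card Q : ℤ) ^ (2 * m + 1) ∧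
      (∀ i : ℤ, β' - m ≤ i → i ≤ α' + m → c' i = c i) ∧
      (∀ a' : ℤ, ∃ a : ℤ, β' ≤ a ∧ a ≤ α' ∧
        ∀ k : ℤ, |k| ≤ (m : ℤ) → c' (a' + k) = c (a + k)) :=
  eventually_periodic_witness_general m c
end
end

section
/- Let C = (Z, N, Q, δ) and G = (Z, N, Q, γ) be fully asynchronous one-dimensional cellular automata, m = max_{n∈N} |n| (or −∞ if N = ∅), and A = {−|Q|^{2m+1}, …, |Q|^{2m+1}} (or {0} if N = ∅). Then C and G are inverse to each other if and only if: (1) for every pair c, c' ∈ Q^Z with D_{c,c'} = {0}, c' = Δ_{{0}}(c) ⇔ c = Γ_{{0}}(c'); and (2) for all c, c' ∈ Q^Z with c = Δ_{{0}}(c) and c' = Γ_{{0}}(c'), there exist a, a' ∈ A such that c = Γ_{{a}}(c) and c' = Δ_{{a'}}(c'). -/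
noncomputable section
open scoped Classical

/-!
Everything is read through windows of radius `m = mrad N`, of which there are `K = |Q|^(2m+1)`.

Forward direction: let `c` be fixed by `δ` at `0`. By pigeonhole, `c` repeats a window at two
positions in `[1, K + 1]` and at two positions in `[-K, 0]`. Folding `ℤ` periodically beyond these
repeats yields `σ : ℤ → ℤ` with `σ 0 = 0` and values in `[-K, K]` such that every window of
`c ∘ σ` at `p` is the window of `c` at `σ p`. So `c ∘ σ` is fixed by `δ` at `0`. Because the
automata are inverse, `c ∘ σ` is fixed by `γ` at some `a`, and then `c` is fixed by `γ` at `σ a`.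

Backward direction: translate a step of `δ` at `a` to a step at `0`. A step that changes the
configuration is undone by `γ` at `0`, by (1). A trivial step is undone by (2), once some
configuration fixed by `γ` at `0` exists. Such a configuration comes from (1): otherwise the
local map of `γ` at `0` would be a fixed-point-free bijection of `Q` inverted by that of `δ`,
and the local map of `δ` fixes `c 0`.
-/

theorem Int.apply_eq_apply_of_modEq {α : Type*} {f : ℤ → α} {a b d x y : ℤ} (hd : 0 < d)
    (hf : ∀ z, a ≤ z → z + d ≤ b → f z = f (z + d))
    (hx : x ∈ Set.Icc a b) (hy : y ∈ Set.Icc a b) (hxy : x ≡ y [ZMOD d]) : f x = f y := by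
  wlog hle : x ≤ y generalizing x y
  · exact (this hy hx hxy.symm (le_of_not_ge hle)).symm
  have step : ∀ k : ℕ, ∀ z, a ≤ z → z + d * k ≤ b → f z = f (z + d * k) := by
    intro k
    induction k with
    | zero => simp
    | succ k ih =>
      intro z hz hzb
      push_cast at hzb
      rw [hf z hz (by nlinarith), ih (z + d) (by linarith) (by linarith)]
      congr 1
      push_cast
      ring
  obtain ⟨k, hk⟩ := hxy.dvd
  lift k to ℕ using (by nlinarith)
  rw [show y = x + d * k by omega]
  exact step k x hx.1 (by rw [← hk]; linarith [hy.2])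

section Window

variable {Q : Type*}

def window (m : ℕ) (c : ℤ → Q) (p : ℤ) : Finset.Icc (-(m : ℤ)) m → Q := fun t => c (p + t)

theorem apply_eq_apply_of_window_eq {m : ℕ} {c : ℤ → Q} {lo hi x y : ℤ}
    (hrep : window m c lo = window m c hi) (hlt : lo < hi)
    (hx : x ∈ Set.Icc (lo - m) (hi + m)) (hy : y ∈ Set.Icc (lo - m) (hi + m))
    (hxy : x ≡ y [ZMOD hi - lo]) : c x = c y := by
  refine Int.apply_eq_apply_of_modEq (sub_pos.2 hlt) (fun z hz hzb => ?_) hx hy hxy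
  have := congrFun hrep ⟨z - lo, Finset.mem_Icc.2 ⟨by omega, by omega⟩⟩
  simp only [window] at this
  convert this using 2 <;> ring

theorem exists_window_eq [Fintype Q] (c : ℤ → Q) (m : ℕ) (lo : ℤ) :
    ∃ i j, lo ≤ i ∧ i < j ∧ j ≤ lo + (Fintype.card Q : ℤ) ^ (2 * m + 1) ∧
      window m c i = window m c j := by
  have hcard : (Finset.univ : Finset (Finset.Icc (-(m : ℤ)) m → Q)).card <
      (Finset.Icc lo (lo + (Fintype.card Q : ℤ) ^ (2 * m + 1))).card := by
    rw [Finset.card_univ, Fintype.card_fun, Fintype.card_coe, Int.card_Icc, Int.card_Icc,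
      show (m + 1 - -m : ℤ).toNat = 2 * m + 1 by omega]
    zify
    omega
  obtain ⟨i, hi, j, hj, hij, heq⟩ :=
    Finset.exists_ne_map_eq_of_card_lt_of_maps_to hcard (f := window m c)
      (fun _ _ => Finset.mem_coe.2 (Finset.mem_univ _))
  rw [Finset.mem_Icc] at hi hj
  rcases hij.lt_or_gt with h | h
  · exact ⟨i, j, hi.1, h, hj.2, heq⟩
  · exact ⟨j, i, hj.1, h, hi.2, heq.symm⟩

def foldOnto (S : Set ℤ) (lo hi p : ℤ) : ℤ := if p ∈ S then lo + (p - lo) % (hi - lo) else p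

theorem foldOnto_modEq (S : Set ℤ) (lo hi p : ℤ) : foldOnto S lo hi p ≡ p [ZMOD hi - lo] := by
  unfold foldOnto
  split_ifs
  · calc lo + (p - lo) % (hi - lo) ≡ lo + (p - lo) [ZMOD hi - lo] :=
          (Int.mod_modEq _ _).add_left _
      _ = p := by ring
  · rfl

theorem foldOnto_of_notMem {S : Set ℤ} {lo hi p : ℤ} (hp : p ∉ S) : foldOnto S lo hi p = p :=
  if_neg hp

theorem foldOnto_mem_Ico {S : Set ℤ} {lo hi p : ℤ} (hlt : lo < hi) (hp : p ∈ S) :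
    foldOnto S lo hi p ∈ Set.Ico lo hi := by
  rw [foldOnto, if_pos hp]
  have := Int.emod_nonneg (p - lo) (by omega : hi - lo ≠ 0)
  have := Int.emod_lt_of_pos (p - lo) (by omega : 0 < hi - lo)
  constructor <;> omega

theorem window_comp_foldOnto {m : ℕ} {c : ℤ → Q} {S : Set ℤ} {lo hi : ℤ}
    (hrep : window m c lo = window m c hi) (hlt : lo < hi)
    -- `S` may only start or stop inside `[lo, hi]`, where `c` is `(hi - lo)`-periodic.
    (hS : ∀ x ∈ S, ∀ y ∉ S, |x - y| ≤ m →
      x ∈ Set.Icc (lo - m) (hi + m) ∧ y ∈ Set.Icc (lo - m) (hi + m)) :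
    window m (c ∘ foldOnto S lo hi) = window m c ∘ foldOnto S lo hi := by
  funext p ⟨t, ht⟩
  rw [Finset.mem_Icc] at ht
  show c (foldOnto S lo hi (p + t)) = c (foldOnto S lo hi p + t)
  have hmod : foldOnto S lo hi (p + t) ≡ foldOnto S lo hi p + t [ZMOD hi - lo] :=
    (foldOnto_modEq S lo hi _).trans ((foldOnto_modEq S lo hi p).add_right t).symm
  by_cases hout : p ∉ S ∧ p + t ∉ S
  · simp only [foldOnto, if_neg hout.1, if_neg hout.2]
  refine apply_eq_apply_of_window_eq hrep hlt ?_ ?_ hmod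
  · by_cases hpt : p + t ∈ S
    · have := foldOnto_mem_Ico hlt hpt
      constructor <;> linarith [this.1, this.2]
    · rw [foldOnto, if_neg hpt]
      exact (hS p (by tauto) _ hpt (by rw [abs_le]; omega)).2
  · by_cases hp : p ∈ S
    · have := foldOnto_mem_Ico hlt hp
      constructor <;> linarith [this.1, this.2]
    · rw [foldOnto, if_neg hp]
      exact (hS _ (by tauto) p hp (by rw [abs_le]; omega)).1

theorem exists_window_comp_eq [Fintype Q] (c : ℤ → Q) (m : ℕ) :
    ∃ σ : ℤ → ℤ, σ 0 = 0 ∧ (∀ p, |σ p| ≤ (Fintype.card Q : ℤ) ^ (2 * m + 1)) ∧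
      window m (c ∘ σ) = window m c ∘ σ := by
  obtain ⟨i, j, hi, hij, hj, hrepR⟩ := exists_window_eq c m 1
  obtain ⟨u, v, hu, huv, hv, hrepL⟩ :=
    exists_window_eq c m (-(Fintype.card Q : ℤ) ^ (2 * m + 1))
  set σR := foldOnto (Set.Ici i) i j
  set σL := foldOnto (Set.Iio v) u v
  have hσR : ∀ p < i, σR p = p := fun p hp => foldOnto_of_notMem (by simpa using hp)
  have hσL : ∀ p ≥ v, σL p = p := fun p hp => foldOnto_of_notMem (by simpa using hp)
  have hR : window m (c ∘ σR) = window m c ∘ σR := by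
    refine window_comp_foldOnto hrepR hij fun x hx y hy hxy => ?_
    simp only [Set.mem_Ici, Set.mem_Icc] at hx hy ⊢
    rw [abs_le] at hxy
    omega
  have hrepL' : window m (c ∘ σR) u = window m (c ∘ σR) v := by
    simp only [hR, Function.comp_apply, hσR u (by omega), hσR v (by omega), hrepL]
  have hL : window m ((c ∘ σR) ∘ σL) = window m (c ∘ σR) ∘ σL := by
    refine window_comp_foldOnto hrepL' huv fun x hx y hy hxy => ?_
    simp only [Set.mem_Iio, Set.mem_Icc] at hx hy ⊢
    rw [abs_le] at hxy
    omega
  refine ⟨σR ∘ σL, ?_, fun p => ?_, hL.trans (by rw [hR]; rfl)⟩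
  · simp only [Function.comp_apply, hσL 0 (by omega), hσR 0 (by omega)]
  rw [abs_le, Function.comp_apply]
  by_cases hp : p < v
  · have : σL p ∈ Set.Ico u v := foldOnto_mem_Ico huv hp
    rw [hσR _ (by linarith [this.2])]
    constructor <;> linarith [this.1, this.2]
  · rw [hσL p (by omega)]
    by_cases hpi : p < i
    · rw [hσR p hpi]; constructor <;> omega
    · have : σR p ∈ Set.Ico i j := foldOnto_mem_Ico hij (by simpa using hpi)
      constructor <;> linarith [this.1, this.2]

end Window

section Automaton

variable {Q : Type*} {N M : Finset ℤ} {δ : (↥N → Q) → Q} {γ : (↥M → Q) → Q}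

theorem stepZ_singleton (a : ℤ) (c : ℤ → Q) :
    stepZ N δ {a} c = Function.update c a (δ fun n => c (a + n)) := by
  funext i
  by_cases h : i = a
  · subst h; simp [stepZ]
  · simp [stepZ, h]

theorem eq_of_eq_stepZ_of_ne {a i : ℤ} {c c' : ℤ → Q} (h : c' = stepZ N δ {a} c)
    (hi : c i ≠ c' i) : i = a := by
  by_contra hia
  rw [h, stepZ_singleton, Function.update_of_ne hia] at hi
  exact hi rfl

theorem stepZ_translate (a k : ℤ) (c : ℤ → Q) :
    (fun i => stepZ N δ {a} c (i + k)) = stepZ N δ {a - k} (fun i => c (i + k)) := by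
  funext i
  simp only [stepZ, Set.mem_singleton_iff, add_right_comm i _ k]
  congr 1
  exact propext ⟨fun h => by omega, fun h => by omega⟩

theorem eq_stepZ_iff_translate {a : ℤ} {c c' : ℤ → Q} (k : ℤ) :
    c' = stepZ N δ {a} c ↔ (fun i => c' (i + k)) = stepZ N δ {a - k} (fun i => c (i + k)) := by
  refine ⟨fun h => h ▸ stepZ_translate a k c, fun h => ?_⟩
  have := congrArg (fun c₀ : ℤ → Q => fun i => c₀ (i + -k)) h
  simpa [stepZ_translate] using this

theorem eq_stepZ_self_iff_of_window_eq {m : ℕ} (hN : ∀ n ∈ N, |n| ≤ (m : ℤ))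
    {c c' : ℤ → Q} {p q : ℤ} (h : window m c p = window m c' q) :
    c = stepZ N δ {p} c ↔ c' = stepZ N δ {q} c' := by
  have hw : ∀ t : ℤ, |t| ≤ m → c (p + t) = c' (q + t) := fun t ht =>
    congrFun h ⟨t, Finset.mem_Icc.2 (abs_le.1 ht)⟩
  simp only [stepZ_singleton, Function.eq_update_self_iff]
  have hδ : (fun n : ↥N => c (p + n)) = fun n : ↥N => c' (q + n) :=
    funext fun n => hw n (hN n n.2)
  have h0 : c p = c' q := by simpa using hw 0 (by simp)
  rw [hδ, h0]

theorem abs_le_mrad {N : Finset ℤ} {n : ℤ} (hn : n ∈ N) : |n| ≤ (mrad N : ℤ) := by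
  rw [Int.abs_eq_natAbs]
  exact_mod_cast Finset.le_sup (f := fun n : ℤ => n.natAbs) hn

theorem exists_acand_window_comp_eq [Fintype Q] (N : Finset ℤ) (c : ℤ → Q) :
    ∃ σ : ℤ → ℤ, σ 0 = 0 ∧ (∀ p, σ p ∈ Acand Q N) ∧
      window (mrad N) (c ∘ σ) = window (mrad N) c ∘ σ := by
  by_cases hN : N = ∅
  · refine ⟨fun _ => 0, rfl, fun _ => by simp [Acand, hN], ?_⟩
    funext p ⟨t, ht⟩
    simp only [hN, mrad, Finset.sup_empty, Nat.bot_eq_zero, Nat.cast_zero, neg_zero,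
      Finset.Icc_self, Finset.mem_singleton] at ht
    simp [window, ht]
  · obtain ⟨σ, h0, hbound, hσ⟩ := exists_window_comp_eq c (mrad N)
    exact ⟨σ, h0, fun p => by simpa [Acand, hN] using hbound p, hσ⟩

theorem FullInverseZ.symm (h : FullInverseZ N M δ γ) : FullInverseZ M N γ δ :=
  fun c c' => (h c' c).symm

theorem FullInverseZ.exists_mem_acand [Fintype Q] {δ γ : (↥N → Q) → Q}
    (h : FullInverseZ N N δ γ) {c : ℤ → Q} (hc : c = stepZ N δ {0} c) :
    ∃ a ∈ Acand Q N, c = stepZ N γ {a} c := by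
  obtain ⟨σ, h0, hσA, hσ⟩ := exists_acand_window_comp_eq N c
  have hfix : ∀ {ε : (↥N → Q) → Q} (p : ℤ),
      c ∘ σ = stepZ N ε {p} (c ∘ σ) ↔ c = stepZ N ε {σ p} c :=
    fun p => eq_stepZ_self_iff_of_window_eq (fun _ => abs_le_mrad) (congrFun hσ p)
  obtain ⟨a, ha⟩ := (h _ _).1 ⟨0, (hfix 0).2 (by rwa [h0])⟩
  exact ⟨σ a, hσA a, (hfix a).1 ha⟩

theorem diffSetZ_comm (c c' : ℤ → Q) : diffSetZ c c' = diffSetZ c' c :=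
  Set.ext fun _ => ne_comm

theorem diffSetZ_update (c : ℤ → Q) (a : ℤ) {q q' : Q} (h : q ≠ q') :
    diffSetZ (Function.update c a q) (Function.update c a q') = {a} := by
  ext i
  by_cases hi : i = a
  · subst hi; simp [diffSetZ, h]
  · simp [diffSetZ, hi]

theorem diffSetZ_of_eq_stepZ {a : ℤ} {c c' : ℤ → Q} (h : c' = stepZ N δ {a} c) (hne : c ≠ c') :
    diffSetZ c c' = {a} := by
  rw [stepZ_singleton] at h
  subst h
  have hne' : c a ≠ δ fun n => c (a + n) := fun ha => hne (by rw [← ha, Function.update_eq_self])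
  simpa only [Function.update_eq_self] using diffSetZ_update c a hne'

def LocalInverseZ (N M : Finset ℤ) (δ : (↥N → Q) → Q) (γ : (↥M → Q) → Q) : Prop :=
  ∀ c c' : ℤ → Q, diffSetZ c c' = {0} → (c' = stepZ N δ {0} c ↔ c = stepZ M γ {0} c')

theorem LocalInverseZ.symm (h : LocalInverseZ N M δ γ) : LocalInverseZ M N γ δ :=
  fun c c' hd => (h c' c (by rwa [diffSetZ_comm])).symm

theorem FullInverseZ.localInverseZ (h : FullInverseZ N M δ γ) : LocalInverseZ N M δ γ := by
  intro c c' hd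
  have h0 : c 0 ≠ c' 0 := show 0 ∈ diffSetZ c c' by rw [hd]; rfl
  constructor
  · intro hc'
    obtain ⟨a, ha⟩ := (h c c').1 ⟨0, hc'⟩
    rwa [← eq_of_eq_stepZ_of_ne ha h0.symm] at ha
  · intro hc
    obtain ⟨a, ha⟩ := (h c c').2 ⟨0, hc⟩
    rwa [← eq_of_eq_stepZ_of_ne ha h0] at ha

theorem LocalInverseZ.exists_eq_stepZ_self [Finite Q] (h : LocalInverseZ N M δ γ)
    {c : ℤ → Q} (hc : c = stepZ N δ {0} c) : ∃ c' : ℤ → Q, c' = stepZ M γ {0} c' := by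
  by_contra! hno
  have hstep : ∀ {K : Finset ℤ} (ε : (↥K → Q) → Q) (q : Q),
      stepZ K ε {0} (Function.update c 0 q) =
        Function.update c 0 (ε fun n => Function.update c 0 q n) := by
    intro K ε q
    rw [stepZ_singleton, Function.update_idem]
    simp only [zero_add]
  set f : Q → Q := fun q => γ fun n => Function.update c 0 q n
  set g : Q → Q := fun q => δ fun n => Function.update c 0 q n
  have hf : ∀ q, f q ≠ q := fun q hq =>
    hno (Function.update c 0 q) (by rw [hstep]; exact congrArg _ hq.symm)
  have hgf : Function.LeftInverse g f := by
    intro q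
    have := (h _ _ (diffSetZ_update c 0 (hf q))).2 (hstep γ q).symm
    rw [hstep] at this
    exact (Function.update_injective c 0 this).symm
  have hg : g (c 0) = c 0 := by
    rw [stepZ_singleton, Function.eq_update_self_iff] at hc
    calc g (c 0) = δ fun n => c (0 + n) := by simp only [g, Function.update_eq_self, zero_add]
      _ = c 0 := hc.symm
  obtain ⟨q, hq⟩ := Finite.injective_iff_surjective.1 hgf.injective (c 0)
  have hq0 : q = c 0 := by rw [← hgf q, hq, hg]
  exact hf (c 0) (hq0 ▸ hq)

theorem LocalInverseZ.exists_eq_stepZ (h : LocalInverseZ N M δ γ)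
    (hfix : ∀ c : ℤ → Q, c = stepZ N δ {0} c → ∃ b, c = stepZ M γ {b} c)
    {a : ℤ} {c c' : ℤ → Q} (hstep : c' = stepZ N δ {a} c) : ∃ b, c = stepZ M γ {b} c' := by
  rw [eq_stepZ_iff_translate a, sub_self] at hstep
  by_cases hcc : c = c'
  · subst hcc
    obtain ⟨b, hb⟩ := hfix _ hstep
    exact ⟨b + a, (eq_stepZ_iff_translate a).2 (by rwa [add_sub_cancel_right])⟩
  · have hne : (fun i => c (i + a)) ≠ fun i => c' (i + a) := fun heq =>
      hcc (funext fun i => by simpa using congrFun heq (i - a))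
    refine ⟨a, (eq_stepZ_iff_translate a).2 ?_⟩
    rw [sub_self]
    exact (h _ _ (diffSetZ_of_eq_stepZ hstep hne)).1 hstep

end Automaton

/-- Characterization of fully asynchronous one-dimensional inverses via the
finite set `𝒜` of active candidate cells. -/
theorem full_inverse_candidate_characterization {Q : Type*} [Fintype Q]
    (N : Finset ℤ) (δ γ : (↥N → Q) → Q) :
    FullInverseZ N N δ γ ↔
      ((∀ c c' : ℤ → Q, diffSetZ c c' = {0} →
          (c' = stepZ N δ {(0 : ℤ)} c ↔ c = stepZ N γ {(0 : ℤ)} c')) ∧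
       (∀ c c' : ℤ → Q,
          c = stepZ N δ {(0 : ℤ)} c → c' = stepZ N γ {(0 : ℤ)} c' →
          (∃ a ∈ Acand Q N, c = stepZ N γ {a} c) ∧
          (∃ a' ∈ Acand Q N, c' = stepZ N δ {a'} c'))) := by
  constructor
  · intro h
    exact ⟨h.localInverseZ, fun c c' hc hc' =>
      ⟨h.exists_mem_acand hc, h.symm.exists_mem_acand hc'⟩⟩
  · rintro ⟨hloc, hfix⟩
    change LocalInverseZ N N δ γ at hloc
    have hγ : ∀ c : ℤ → Q, c = stepZ N δ {0} c → ∃ b, c = stepZ N γ {b} c := fun c hc =>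
      have ⟨c', hc'⟩ := hloc.exists_eq_stepZ_self hc
      have ⟨⟨b, _, hb⟩, _⟩ := hfix c c' hc hc'
      ⟨b, hb⟩
    have hδ : ∀ c' : ℤ → Q, c' = stepZ N γ {0} c' → ∃ b, c' = stepZ N δ {b} c' := fun c' hc' =>
      have ⟨c, hc⟩ := hloc.symm.exists_eq_stepZ_self hc'
      have ⟨_, ⟨b, _, hb⟩⟩ := hfix c c' hc hc'
      ⟨b, hb⟩
    exact fun c c' => ⟨fun ⟨_, ha⟩ => hloc.exists_eq_stepZ hγ ha,
      fun ⟨_, ha⟩ => hloc.symm.exists_eq_stepZ hδ ha⟩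
end
end

section
/- The identity cellular automaton (δ(ℓ) = ℓ(0) for all local configurations ℓ) is the only purely asynchronous cellular automaton (with 0 ∈ N) for which every global configuration has at most one predecessor under the purely asynchronous global transition relation Δ. -/
noncomputable section
open scoped Classical

/-- The identity CA is the only purely asynchronous CA for which every global
configuration has at most one predecessor. -/
theorem at_most_one_predecessor_iff_identity {d : ℕ} {Q : Type*} (hd : 0 < d)
    (N : Finset (Cell d)) (h0 : (0 : Cell d) ∈ N) (δ : (↥N → Q) → Q) :
    (∀ c' c₁ c₂ : Cell d → Q,
        (∃ A : Set (Cell d), c' = step N δ A c₁) →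
        (∃ A : Set (Cell d), c' = step N δ A c₂) → c₁ = c₂) ↔
      ∀ ℓ : ↥N → Q, δ ℓ = ℓ ⟨0, h0⟩ := by
  constructor
  · intro h ℓ
    set c : Cell d → Q := fun i => if h' : i ∈ N then ℓ ⟨i, h'⟩ else ℓ ⟨0, h0⟩ with hc
    have key : c = step N δ {0} c := by
      refine h (step N δ {0} c) c (step N δ {0} c) ⟨{0}, rfl⟩ ⟨∅, ?_⟩
      funext i
      simp [step]
    have h2 := congrFun key 0
    have hmem : (0 : Cell d) ∈ ({0} : Set (Cell d)) := rfl
    rw [step, if_pos hmem] at h2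
    have hfun : (fun n : ↥N => c (0 + n.1)) = ℓ := by
      funext n
      simp only [zero_add, hc]
      rw [dif_pos n.2]
    rw [hfun] at h2
    have hc0 : c 0 = ℓ ⟨0, h0⟩ := by simp only [hc]; rw [dif_pos h0]
    rw [hc0] at h2
    exact h2.symm
  · rintro h c' c₁ c₂ ⟨A, hA⟩ ⟨B, hB⟩
    have hid : ∀ (A : Set (Cell d)) (c : Cell d → Q), step N δ A c = c := by
      intro A c
      funext i
      simp only [step]
      split
      · rw [h]; simp
      · rfl
    rw [hid] at hA hB
    rw [← hA, ← hB]
end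
end
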